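/- arXiv:1101.2653 — 3 statements merged into one kernel-verified Lean document; each statement's English description precedes it below -/
import Mathlib

section
/- Ground state representation (GSR): Let Ω be an open set in ℝ^n, let f : Ω → ℝ be twice continuously differentiable with f(x) > 0 for all x ∈ Ω, let α ∈ ℝ, and let u : ℝ^n → ℝ be smooth with compact support contained in Ω. Then ∫_Ω |∇u|² dx = ∫_Ω ( α(1−α)·|∇f|²/f² + α·(−Δf)/f )·|u|² dx + ∫_Ω |∇(f^{−α}·u)|²·f^{2α} dx. -/
open MeasureTheory Real

/-- The Laplacian `Δf = div ∘ ∇ f` on `ℝⁿ`, as the sum of second partial derivatives. -/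
noncomputable def laplacian {n : ℕ} (f : EuclideanSpace ℝ (Fin n) → ℝ)
    (x : EuclideanSpace ℝ (Fin n)) : ℝ :=
  ∑ i : Fin n,
    fderiv ℝ (fun y => fderiv ℝ f y (EuclideanSpace.single i 1)) x (EuclideanSpace.single i 1)

theorem my_integral_fderiv_eq_zero {E : Type*} [NormedAddCommGroup E] [NormedSpace ℝ E]
    [MeasurableSpace E] [BorelSpace E]
    [FiniteDimensional ℝ E] (μ : Measure E) [μ.IsAddHaarMeasure]
    (g : E → ℝ) (hg : ContDiff ℝ 1 g) (h'g : HasCompactSupport g) (v : E) :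
    ∫ x, fderiv ℝ g x v ∂μ = 0 := by
  obtain ⟨C, hC⟩ := ContDiff.lipschitzWith_of_hasCompactSupport h'g hg one_ne_zero
  have h := LipschitzWith.integral_lineDeriv_mul_eq (f := fun _ => (1:ℝ)) (μ := μ)
    (LipschitzWith.const' (K := 1) 1) hC h'g (-v)
  simp only [mul_one, neg_neg] at h
  have hz : ∀ x : E, lineDeriv ℝ (fun _ => (1:ℝ)) x (-v) = 0 := fun x => by
    simp [lineDeriv]
  have h2 : ∀ x, lineDeriv ℝ g x v = fderiv ℝ g x v := fun x =>
    ((hg.differentiable one_ne_zero) x).lineDeriv_eq_fderiv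
  simp_rw [hz, zero_mul, integral_zero, h2] at h
  exact h.symm

lemma my_grad_apply {n : ℕ} (g : EuclideanSpace ℝ (Fin n) → ℝ) (x : EuclideanSpace ℝ (Fin n))
    (i : Fin n) :
    gradient g x i = fderiv ℝ g x (EuclideanSpace.single i 1) := by
  have h : (inner ℝ (gradient g x) (EuclideanSpace.single i 1 : EuclideanSpace ℝ (Fin n)) : ℝ)
      = fderiv ℝ g x (EuclideanSpace.single i 1) := by
    simp [gradient, InnerProductSpace.toDual_symm_apply]
  rw [← h, EuclideanSpace.inner_single_right]
  simp

lemma my_norm_grad_sq {n : ℕ} (g : EuclideanSpace ℝ (Fin n) → ℝ) (x : EuclideanSpace ℝ (Fin n)) :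
    ‖gradient g x‖ ^ 2 = ∑ i, (fderiv ℝ g x (EuclideanSpace.single i 1))^2 := by
  rw [← real_inner_self_eq_norm_sq, PiLp.inner_apply]
  simp_rw [← my_grad_apply, RCLike.inner_apply, conj_trivial, ← sq]

lemma my_norm_grad_eq {n : ℕ} (g : EuclideanSpace ℝ (Fin n) → ℝ) (x : EuclideanSpace ℝ (Fin n)) :
    ‖gradient g x‖ = ‖fderiv ℝ g x‖ := by
  simp [gradient]

lemma my_integrableOn {n : ℕ} {Ω K : Set (EuclideanSpace ℝ (Fin n))} (hΩ : IsOpen Ω)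
    (hK : IsCompact K) (hKΩ : K ⊆ Ω) {h : EuclideanSpace ℝ (Fin n) → ℝ}
    (hc : ContinuousOn h Ω) (hsupp : ∀ x ∈ Ω, x ∉ K → h x = 0) :
    IntegrableOn h Ω := by
  have h1 : IntegrableOn h K := (hc.mono hKΩ).integrableOn_compact hK
  have h2 : IntegrableOn h (Ω \ K) := by
    refine (integrableOn_zero : IntegrableOn (fun _ => (0:ℝ)) _ _).congr_fun
      (fun x hx => (hsupp x hx.1 hx.2).symm) (hΩ.measurableSet.diff hK.measurableSet)
  exact (h1.union h2).mono_set (fun x hx => by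
    by_cases hxK : x ∈ K
    · exact Set.mem_union_left _ hxK
    · exact Set.mem_union_right _ ⟨hx, hxK⟩)

/-- **Ground state representation (GSR).** Let `Ω ⊆ ℝⁿ` be open, `f` twice continuously
differentiable and positive on `Ω`, `α ∈ ℝ`, and `u ∈ C₀^∞(Ω)`. Then
`∫_Ω |∇u|² = ∫_Ω (α(1−α)|∇f|²/f² + α(−Δf)/f)|u|² + ∫_Ω |∇(f^{−α}u)|² f^{2α}`. -/
theorem ground_state_representation (n : ℕ) (Ω : Set (EuclideanSpace ℝ (Fin n)))
    (hΩ : IsOpen Ω) (f : EuclideanSpace ℝ (Fin n) → ℝ)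
    (hf_pos : ∀ x ∈ Ω, 0 < f x) (hf : ContDiffOn ℝ 2 f Ω) (α : ℝ)
    (u : EuclideanSpace ℝ (Fin n) → ℝ) (hu : ContDiff ℝ (⊤ : ℕ∞) u)
    (hu_cpt : HasCompactSupport u) (hu_supp : tsupport u ⊆ Ω) :
    ∫ x in Ω, ‖gradient u x‖ ^ 2 =
      (∫ x in Ω,
        (α * (1 - α) * (‖gradient f x‖ ^ 2 / (f x) ^ 2) + α * (-(laplacian f x) / f x))
          * |u x| ^ 2)
      + ∫ x in Ω, ‖gradient (fun y => f y ^ (-α) * u y) x‖ ^ 2 * f x ^ (2 * α) := by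
  classical
  let e : Fin n → EuclideanSpace ℝ (Fin n) := fun i => EuclideanSpace.single i 1
  set K := tsupport u with hKdef
  have hKc : IsCompact K := hu_cpt
  have hKo : IsOpen Kᶜ := (isClosed_tsupport u).isOpen_compl
  have huK : ∀ x ∉ K, u x = 0 := fun x hx => image_eq_zero_of_notMem_tsupport hx
  have hfx : ∀ x ∈ Ω, ContDiffAt ℝ 2 f x := fun x hx => hf.contDiffAt (hΩ.mem_nhds hx)
  set v : EuclideanSpace ℝ (Fin n) → ℝ := fun y => f y ^ (-α) * u y with hvdef
  let φ : Fin n → EuclideanSpace ℝ (Fin n) → ℝ := fun i => fun y => fderiv ℝ f y (EuclideanSpace.single i 1)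
  let g : Fin n → EuclideanSpace ℝ (Fin n) → ℝ := fun i => fun y => α * (u y * u y * (f y)⁻¹ * φ i y)
  let D : EuclideanSpace ℝ (Fin n) → ℝ := fun x => ∑ i, fderiv ℝ (g i) x (e i)
  -- smoothness of g i
  have hgC1 : ∀ i, ContDiff ℝ 1 (g i) := by
    intro i
    rw [contDiff_iff_contDiffAt]
    intro x
    by_cases hx : x ∈ Ω
    · have h2 : ContDiffAt ℝ 2 f x := hfx x hx
      have hfd : ContDiffAt ℝ 1 (fderiv ℝ f) x := h2.fderiv_right (by norm_num)
      have hφ : ContDiffAt ℝ 1 (φ i) x := hfd.clm_apply contDiffAt_const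
      have hui : ContDiffAt ℝ 1 u x := (hu.of_le (by simp)).contDiffAt
      have hfi : ContDiffAt ℝ 1 (fun y => (f y)⁻¹) x :=
        (h2.of_le one_le_two).inv (hf_pos x hx).ne'
      exact contDiffAt_const.mul (((hui.mul hui).mul hfi).mul hφ)
    · have hxK : x ∈ Kᶜ := fun h => hx (hu_supp h)
      refine ContDiffAt.congr_of_eventuallyEq (contDiffAt_const (c := (0:ℝ))) ?_
      filter_upwards [hKo.mem_nhds hxK] with y hy
      simp [g, huK y hy]
  have hgsupp : ∀ i, Function.support (g i) ⊆ K := by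
    intro i x hx
    by_contra hxK
    exact hx (by simp [g, huK x hxK])
  have hgcs : ∀ i, HasCompactSupport (g i) := fun i =>
    HasCompactSupport.mono hu_cpt (fun x hx => by
      by_contra hxu
      exact hx (by simp [g, Function.notMem_support.mp hxu]))
  -- pointwise identity
  have key : ∀ x ∈ Ω,
      ‖gradient u x‖ ^ 2 =
        (α * (1 - α) * (‖gradient f x‖ ^ 2 / (f x) ^ 2) + α * (-(laplacian f x) / f x))
          * |u x| ^ 2
        + ‖gradient v x‖ ^ 2 * f x ^ (2 * α) + D x := by
    intro x hx
    have hc : 0 < f x := hf_pos x hx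
    have h2 : ContDiffAt ℝ 2 f x := hfx x hx
    have hF : HasFDerivAt f (fderiv ℝ f x) x := (h2.differentiableAt two_ne_zero).hasFDerivAt
    have hU : HasFDerivAt u (fderiv ℝ u x) x := (hu.differentiable (by simp) x).hasFDerivAt
    have hφd : ∀ i, HasFDerivAt (φ i) (fderiv ℝ (φ i) x) x := fun i =>
      ((((h2.fderiv_right (by norm_num)).clm_apply contDiffAt_const).differentiableAt
        one_ne_zero).hasFDerivAt)
    have hinv : HasFDerivAt (fun y => (f y)⁻¹) ((-(f x ^ 2)⁻¹) • fderiv ℝ f x) x :=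
      (hasDerivAt_inv hc.ne').comp_hasFDerivAt x hF
    -- derivative of v
    have hrp : HasFDerivAt (fun y => f y ^ (-α)) ((-α * f x ^ (-α - 1)) • fderiv ℝ f x) x :=
      hF.rpow_const (Or.inl hc.ne')
    have hv : HasFDerivAt v ((f x ^ (-α)) • fderiv ℝ u x
        + u x • ((-α * f x ^ (-α - 1)) • fderiv ℝ f x)) x := hrp.mul hU
    have hvd := hv.fderiv
    have hP1 : f x ^ (-α - 1) = f x ^ (-α) * (f x)⁻¹ := by
      rw [show -α - 1 = -α + (-1) by ring, Real.rpow_add hc, Real.rpow_neg_one]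
    have hP2 : (f x ^ (-α))^2 * f x ^ (2*α) = 1 := by
      rw [sq, ← Real.rpow_add hc, ← Real.rpow_add hc,
        show -α + -α + 2*α = (0:ℝ) by ring, Real.rpow_zero]
    have hv_i : ∀ i : Fin n, fderiv ℝ v x (EuclideanSpace.single i 1)
        = f x ^ (-α) * (fderiv ℝ u x (EuclideanSpace.single i 1)
          - α * u x * fderiv ℝ f x (EuclideanSpace.single i 1) * (f x)⁻¹) := by
      intro i
      rw [hvd]
      simp only [ContinuousLinearMap.add_apply, ContinuousLinearMap.smul_apply, smul_eq_mul, hP1]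
      ring
    have hgd : ∀ i : Fin n, fderiv ℝ (g i) x (EuclideanSpace.single i 1)
        = α * ((u x * u x * (f x)⁻¹) * fderiv ℝ (φ i) x (EuclideanSpace.single i 1)
          + fderiv ℝ f x (EuclideanSpace.single i 1) *
            ((u x * u x) * (-(f x ^ 2)⁻¹ * fderiv ℝ f x (EuclideanSpace.single i 1))
             + (f x)⁻¹ * (u x * fderiv ℝ u x (EuclideanSpace.single i 1)
                + u x * fderiv ℝ u x (EuclideanSpace.single i 1)))) := by
      intro i
      have h := ((((hU.mul hU).mul hinv).mul (hφd i)).const_mul α).fderiv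
      rw [show (fun y => α * ((u * u * fun y => (f y)⁻¹) * φ i) y) = g i from rfl] at h
      rw [h]
      simp only [ContinuousLinearMap.smul_apply, ContinuousLinearMap.add_apply, smul_eq_mul, Pi.mul_apply]
      rfl
    have hD : D x = ∑ i : Fin n,
        α * ((u x * u x * (f x)⁻¹) * fderiv ℝ (φ i) x (EuclideanSpace.single i 1)
          + fderiv ℝ f x (EuclideanSpace.single i 1) *
            ((u x * u x) * (-(f x ^ 2)⁻¹ * fderiv ℝ f x (EuclideanSpace.single i 1))
             + (f x)⁻¹ * (u x * fderiv ℝ u x (EuclideanSpace.single i 1)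
                + u x * fderiv ℝ u x (EuclideanSpace.single i 1)))) :=
      Finset.sum_congr rfl fun i _ => hgd i
    have hlapd : laplacian f x = ∑ i : Fin n, fderiv ℝ (φ i) x (EuclideanSpace.single i 1) := rfl
    rw [my_norm_grad_sq u, my_norm_grad_sq f, my_norm_grad_sq v, sq_abs, hlapd, hD]
    have hvsum : (∑ i : Fin n, (fderiv ℝ v x (EuclideanSpace.single i 1))^2) * f x ^ (2*α)
        = ∑ i : Fin n, (fderiv ℝ u x (EuclideanSpace.single i 1)
            - α * u x * fderiv ℝ f x (EuclideanSpace.single i 1) * (f x)⁻¹)^2 := by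
      rw [Finset.sum_mul]
      refine Finset.sum_congr rfl fun i _ => ?_
      rw [hv_i i]
      linear_combination (fderiv ℝ u x (EuclideanSpace.single i 1)
        - α * u x * fderiv ℝ f x (EuclideanSpace.single i 1) * (f x)⁻¹)^2 * hP2
    rw [hvsum]
    rw [Finset.sum_div, Finset.mul_sum, ← Finset.sum_neg_distrib, Finset.sum_div,
      Finset.mul_sum, ← Finset.sum_add_distrib, Finset.sum_mul, ← Finset.sum_add_distrib,
      ← Finset.sum_add_distrib]
    refine Finset.sum_congr rfl fun i _ => ?_
    field_simp
    ring
  -- vanishing of D outside K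
  have hDzero : ∀ x ∉ K, D x = 0 := by
    intro x hx
    have : ∀ i, fderiv ℝ (g i) x = 0 := by
      intro i
      have hev : g i =ᶠ[nhds x] (fun _ => (0:ℝ)) := by
        filter_upwards [hKo.mem_nhds hx] with y hy
        simp [g, huK y hy]
      rw [Filter.EventuallyEq.fderiv_eq hev]
      exact fderiv_const_apply 0
    simp [D, this]
  -- integral of D vanishes
  have hDint : ∫ x in Ω, D x = 0 := by
    have h0 : ∫ x in Ω, D x = ∫ x, D x :=
      setIntegral_eq_integral_of_forall_compl_eq_zero
        (fun x hx => hDzero x (fun hK => hx (hu_supp hK)))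
    have hint : ∀ i : Fin n, Integrable (fun x => fderiv ℝ (g i) x (EuclideanSpace.single i 1)) := by
      intro i
      refine Continuous.integrable_of_hasCompactSupport
        (((hgC1 i).continuous_fderiv one_ne_zero).clm_apply continuous_const) ?_
      exact (hgcs i).fderiv_apply ℝ _
    have h1 : (∫ x, D x) = ∑ i : Fin n, ∫ x, fderiv ℝ (g i) x (EuclideanSpace.single i 1) :=
      integral_finset_sum _ (fun i _ => hint i)
    rw [h0, h1]
    exact Finset.sum_eq_zero fun i _ =>
      my_integral_fderiv_eq_zero volume (g i) (hgC1 i) (hgcs i) _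
  -- integrability
  have hI2 : IntegrableOn (fun x =>
      (α * (1 - α) * (‖gradient f x‖ ^ 2 / (f x) ^ 2) + α * (-(laplacian f x) / f x))
        * |u x| ^ 2) Ω := by
    refine my_integrableOn hΩ hKc hu_supp ?_ (fun x hx hxK => by simp [huK x hxK])
    have hfc : ContinuousOn f Ω := hf.continuousOn
    have hgradf : ContinuousOn (fun x => ‖gradient f x‖) Ω := by
      have h1 : ContinuousOn (fderiv ℝ f) Ω := hf.continuousOn_fderiv_of_isOpen hΩ one_le_two
      exact ((InnerProductSpace.toDual ℝ _).symm.continuous.comp_continuousOn h1).norm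
    have hfd1 : ContDiffOn ℝ 1 (fderiv ℝ f) Ω := hf.fderiv_of_isOpen hΩ (by norm_num)
    have hlap : ContinuousOn (fun x => laplacian f x) Ω := by
      simp only [laplacian]
      refine continuousOn_finset_sum _ (fun i _ => ?_)
      have hφ1 : ContDiffOn ℝ 1 (φ i) Ω := hfd1.clm_apply contDiffOn_const
      exact (hφ1.continuousOn_fderiv_of_isOpen hΩ le_rfl).clm_apply continuousOn_const
    have h2 : ContinuousOn (fun x => ‖gradient f x‖ ^ 2 / f x ^ 2) Ω :=
      (hgradf.pow 2).div (hfc.pow 2) (fun x hx => pow_ne_zero _ (hf_pos x hx).ne')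
    have h3 : ContinuousOn (fun x => -(laplacian f x) / f x) Ω :=
      hlap.neg.div hfc (fun x hx => (hf_pos x hx).ne')
    exact ((continuousOn_const.mul h2).add (continuousOn_const.mul h3)).mul
      ((hu.continuous.abs.pow 2).continuousOn)
  have hvzero : ∀ x ∉ K, gradient v x = 0 := by
    intro x hx
    have hev : v =ᶠ[nhds x] (fun _ => (0:ℝ)) := by
      filter_upwards [hKo.mem_nhds hx] with y hy
      simp [hvdef, huK y hy]
    have : fderiv ℝ v x = 0 := by
      rw [Filter.EventuallyEq.fderiv_eq hev]
      exact fderiv_const_apply 0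
    simp [gradient, this]
  have hI3 : IntegrableOn (fun x => ‖gradient v x‖ ^ 2 * f x ^ (2 * α)) Ω := by
    refine my_integrableOn hΩ hKc hu_supp ?_ (fun x hx hxK => by simp [hvzero x hxK])
    have hfc : ContinuousOn f Ω := hf.continuousOn
    have hvC1 : ContDiffOn ℝ 1 v Ω := by
      have h1 : ContDiffOn ℝ 1 (fun y => f y ^ (-α)) Ω := by
        refine ContDiffOn.rpow_const_of_ne (hf.of_le one_le_two) ?_
        exact fun x hx => (hf_pos x hx).ne'
      exact h1.mul (hu.of_le (by simp)).contDiffOn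
    have hgradv : ContinuousOn (fun x => ‖gradient v x‖) Ω := by
      have h1 : ContinuousOn (fderiv ℝ v) Ω := hvC1.continuousOn_fderiv_of_isOpen hΩ le_rfl
      exact ((InnerProductSpace.toDual ℝ _).symm.continuous.comp_continuousOn h1).norm
    exact (hgradv.pow 2).mul (hfc.rpow_const (fun x hx => Or.inl (hf_pos x hx).ne'))
  have hID : IntegrableOn D Ω := by
    refine my_integrableOn hΩ hKc hu_supp ?_ (fun x _ hx => hDzero x hx)
    exact (continuousOn_finset_sum _ (fun i _ =>
      (((hgC1 i).continuous_fderiv one_ne_zero).clm_apply continuous_const).continuousOn))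
  calc ∫ x in Ω, ‖gradient u x‖ ^ 2
      = ∫ x in Ω,
        ((α * (1 - α) * (‖gradient f x‖ ^ 2 / (f x) ^ 2) + α * (-(laplacian f x) / f x))
          * |u x| ^ 2
        + ‖gradient v x‖ ^ 2 * f x ^ (2 * α) + D x) := by
        refine setIntegral_congr_fun hΩ.measurableSet (fun x hx => key x hx)
    _ = (∫ x in Ω,
        ((α * (1 - α) * (‖gradient f x‖ ^ 2 / (f x) ^ 2) + α * (-(laplacian f x) / f x))
          * |u x| ^ 2
        + ‖gradient v x‖ ^ 2 * f x ^ (2 * α))) + ∫ x in Ω, D x := by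
        exact integral_add (hI2.add hI3) hID
    _ = (∫ x in Ω,
        (α * (1 - α) * (‖gradient f x‖ ^ 2 / (f x) ^ 2) + α * (-(laplacian f x) / f x))
          * |u x| ^ 2)
      + ∫ x in Ω, ‖gradient v x‖ ^ 2 * f x ^ (2 * α) := by
        rw [hDint, add_zero, integral_add hI2 hI3]
end

section
/- Many-particle Hardy inequality with explicit constant: Let d ≥ 3, N ≥ 2, and Ω := { (x₁,…,x_N) ∈ (ℝ^d)^N : x_i ≠ x_j for all i ≠ j }. Then for every smooth u : (ℝ^d)^N → ℝ with compact support in Ω, ∫_Ω |∇u|² dx ≥ ((d−2)²/N)·Σ_{1≤i<j≤N} ∫_Ω |u|²/|x_i − x_j|² dx. -/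
open MeasureTheory Real Finset

/-- The `i`-th particle coordinate of a configuration `x ∈ (ℝ^d)^N ≅ ℝ^{dN}`. -/
noncomputable def particle {d N : ℕ} (x : EuclideanSpace ℝ (Fin N × Fin d)) (i : Fin N) :
    EuclideanSpace ℝ (Fin d) :=
  WithLp.toLp 2 (fun a => x (i, a))

theorem integral_fderiv_apply_eq_zero
    {E : Type*} [NormedAddCommGroup E] [NormedSpace ℝ E] [FiniteDimensional ℝ E]
    [MeasurableSpace E] [BorelSpace E] {μ : Measure E} [μ.IsAddHaarMeasure]
    {g : E → ℝ} (hg : ContDiff ℝ 1 g) (h'g : HasCompactSupport g) (v : E) :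
    ∫ x, fderiv ℝ g x v ∂μ = 0 := by
  obtain ⟨x₀, hx₀⟩ :=
    ((hg.continuous_fderiv one_ne_zero).norm).exists_forall_ge_of_hasCompactSupport
      (h'g.fderiv (𝕜 := ℝ)).norm
  set C : NNReal := ⟨max ‖fderiv ℝ g x₀‖ 0, le_max_right _ _⟩ with hC
  have hlip : LipschitzWith C g := by
    apply lipschitzWith_of_nnnorm_fderiv_le (hg.differentiable one_ne_zero)
    intro x
    rw [← NNReal.coe_le_coe]
    exact le_trans (hx₀ x) (le_max_left _ _)
  have h1 : LipschitzWith 0 (fun _ : E => (1:ℝ)) := LipschitzWith.const 1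
  have key := h1.integral_lineDeriv_mul_eq (μ := μ) hlip h'g (-v)
  have hz : ∀ x : E, lineDeriv ℝ (fun _ : E => (1:ℝ)) x (-v) = 0 := by
    intro x
    rw [(differentiableAt_const (1:ℝ)).lineDeriv_eq_fderiv]
    simp
  simp only [hz, zero_mul, integral_zero, neg_neg, mul_one] at key
  rw [key]
  apply integral_congr_ae
  filter_upwards with x
  exact (((hg.differentiable one_ne_zero) x).lineDeriv_eq_fderiv).symm

namespace MPH

variable {d N : ℕ}

abbrev Conf (d N : ℕ) := EuclideanSpace ℝ (Fin N × Fin d)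

noncomputable def bvec (d N : ℕ) (c : Fin N × Fin d) : Conf d N := EuclideanSpace.single c (1:ℝ)

noncomputable def sgn (i j k : Fin N) : ℝ := if k = i then 1 else if k = j then -1 else 0

noncomputable def Yc (d : ℕ) {N : ℕ} (i j : Fin N) (b : Fin d) : Conf d N →L[ℝ] ℝ :=
  EuclideanSpace.proj (i, b) - EuclideanSpace.proj (j, b)

noncomputable def rho {d N : ℕ} (i j : Fin N) (x : Conf d N) : ℝ :=
  ∑ b, Yc d i j b x * Yc d i j b x

noncomputable def Gc {d N : ℕ} (i j : Fin N) (c : Fin N × Fin d) (x : Conf d N) : ℝ :=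
  sgn i j c.1 * Yc d i j c.2 x / rho i j x

lemma Yc_apply (i j : Fin N) (b : Fin d) (x : Conf d N) :
    Yc d i j b x = x (i, b) - x (j, b) := rfl

lemma sgn_sq_sum (i j : Fin N) (hij : i ≠ j) : ∑ k, sgn i j k ^ 2 = 2 := by
  have : ∀ k, sgn i j k ^ 2 = (if k = i then (1:ℝ) else 0) + (if k = j then 1 else 0) := by
    intro k
    by_cases h1 : k = i
    · subst h1
      simp [sgn, (by simpa using hij : k ≠ j)]
    · by_cases h2 : k = j
      · subst h2
        simp [sgn, h1]
      · simp [sgn, h1, h2]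
  rw [Finset.sum_congr rfl (fun k _ => this k)]
  rw [Finset.sum_add_distrib]
  simp
  norm_num

lemma rho_nonneg (i j : Fin N) (x : Conf d N) : 0 ≤ rho i j x :=
  Finset.sum_nonneg fun b _ => mul_self_nonneg _

lemma rho_eq_norm (i j : Fin N) (x : Conf d N) :
    rho i j x = ‖particle x i - particle x j‖ ^ 2 := by
  rw [PiLp.norm_sq_eq_of_L2]
  apply Finset.sum_congr rfl
  intro b _
  have : (particle x i - particle x j) b = x (i, b) - x (j, b) := by simp [particle]
  rw [this, Yc_apply, Real.norm_eq_abs, sq_abs, pow_two]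

lemma rho_eq_zero_iff (i j : Fin N) (x : Conf d N) :
    rho i j x = 0 ↔ particle x i = particle x j := by
  rw [rho_eq_norm, pow_eq_zero_iff (by norm_num), norm_eq_zero, sub_eq_zero]

lemma Yc_bvec (i j : Fin N) (hij : i ≠ j) (b : Fin d) (c : Fin N × Fin d) :
    Yc d i j b (bvec d N c) = if b = c.2 then sgn i j c.1 else 0 := by
  obtain ⟨k, a⟩ := c
  have h1 : (bvec d N (k, a)) (i, b) = if (i, b) = (k, a) then (1:ℝ) else 0 :=
    EuclideanSpace.single_apply _ _ _
  have h2 : (bvec d N (k, a)) (j, b) = if (j, b) = (k, a) then (1:ℝ) else 0 :=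
    EuclideanSpace.single_apply _ _ _
  rw [Yc_apply, h1, h2]
  by_cases hb : b = a
  · subst hb
    by_cases hk : k = i
    · subst hk
      simp [sgn, Prod.ext_iff, hij, Ne.symm hij]
    · by_cases hk2 : k = j
      · subst hk2
        simp [sgn, Prod.ext_iff, hij, Ne.symm hij, hk]
      · simp [sgn, Prod.ext_iff, Ne.symm hk, Ne.symm hk2, hk, hk2]
  · simp [Prod.ext_iff, hb]

noncomputable def Drho {d N : ℕ} (i j : Fin N) (x : Conf d N) : Conf d N →L[ℝ] ℝ :=
  ∑ b, (Yc d i j b x • Yc d i j b + Yc d i j b x • Yc d i j b)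

lemma hasFDerivAt_rho (i j : Fin N) (x : Conf d N) :
    HasFDerivAt (rho i j) (Drho i j x) x := by
  unfold rho
  apply HasFDerivAt.fun_sum
  intro b _
  exact (Yc d i j b).hasFDerivAt.mul (Yc d i j b).hasFDerivAt

noncomputable def Gd {d N : ℕ} (i j : Fin N) (c : Fin N × Fin d) (x : Conf d N) :
    Conf d N →L[ℝ] ℝ :=
  (sgn i j c.1 * Yc d i j c.2 x) • ((-(rho i j x ^ 2)⁻¹) • Drho i j x) +
    (rho i j x)⁻¹ • (sgn i j c.1 • (Yc d i j c.2 : Conf d N →L[ℝ] ℝ))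

lemma hasFDerivAt_Gc (i j : Fin N) (c : Fin N × Fin d) (x : Conf d N)
    (hρ : rho i j x ≠ 0) : HasFDerivAt (Gc i j c) (Gd i j c x) x := by
  have h1 : HasFDerivAt (fun y : Conf d N => sgn i j c.1 * Yc d i j c.2 y)
      (sgn i j c.1 • (Yc d i j c.2 : Conf d N →L[ℝ] ℝ)) x :=
    (Yc d i j c.2).hasFDerivAt.const_mul _
  have h2 : HasFDerivAt (fun y : Conf d N => (rho i j y)⁻¹)
      ((-(rho i j x ^ 2)⁻¹) • Drho i j x) x :=
    (hasDerivAt_inv hρ).comp_hasFDerivAt x (hasFDerivAt_rho i j x)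
  have h3 : HasFDerivAt (fun y : Conf d N => sgn i j c.1 * Yc d i j c.2 y * (rho i j y)⁻¹) _ x :=
    h1.mul h2
  have : (fun y : Conf d N => sgn i j c.1 * Yc d i j c.2 y * (rho i j y)⁻¹) = Gc i j c := by
    funext y
    rw [Gc, div_eq_mul_inv]
  rw [this] at h3
  unfold Gd
  exact h3


lemma Drho_bvec (i j : Fin N) (hij : i ≠ j) (c : Fin N × Fin d) (x : Conf d N) :
    Drho i j x (bvec d N c) = 2 * Yc d i j c.2 x * sgn i j c.1 := by
  rw [Drho]
  rw [ContinuousLinearMap.sum_apply]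
  have : ∀ b, (Yc d i j b x • Yc d i j b + Yc d i j b x • Yc d i j b) (bvec d N c)
      = (if b = c.2 then 2 * Yc d i j b x * sgn i j c.1 else 0) := by
    intro b
    simp only [ContinuousLinearMap.add_apply, ContinuousLinearMap.smul_apply, smul_eq_mul]
    rw [Yc_bvec i j hij b c]
    by_cases hb : b = c.2 <;> simp [hb] <;> ring
  rw [Finset.sum_congr rfl (fun b _ => this b), Finset.sum_ite_eq' _ _ _]
  simp

lemma Gd_bvec (i j : Fin N) (hij : i ≠ j) (c : Fin N × Fin d) (x : Conf d N) :
    Gd i j c x (bvec d N c)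
      = sgn i j c.1 ^ 2 * ((rho i j x)⁻¹ - 2 * Yc d i j c.2 x ^ 2 / rho i j x ^ 2) := by
  simp only [Gd, ContinuousLinearMap.add_apply, ContinuousLinearMap.smul_apply,
    smul_eq_mul]
  rw [Drho_bvec i j hij c x, Yc_bvec i j hij c.2 c]
  rw [if_pos rfl]
  field_simp
  ring

lemma sum_Gd_bvec (i j : Fin N) (hij : i ≠ j) (x : Conf d N) (hρ : rho i j x ≠ 0) :
    ∑ c, Gd i j c x (bvec d N c) = 2 * ((d : ℝ) - 2) / rho i j x := by
  rw [Fintype.sum_prod_type]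
  have : ∀ k a, Gd i j (k, a) x (bvec d N (k, a))
      = sgn i j k ^ 2 * ((rho i j x)⁻¹ - 2 * Yc d i j a x ^ 2 / rho i j x ^ 2) := by
    intro k a
    exact Gd_bvec i j hij (k, a) x
  simp only [this]
  rw [← Finset.sum_mul_sum]
  rw [sgn_sq_sum i j hij]
  have h1 : ∑ a : Fin d, ((rho i j x)⁻¹ - 2 * Yc d i j a x ^ 2 / rho i j x ^ 2)
      = (d : ℝ) * (rho i j x)⁻¹ - 2 * rho i j x / rho i j x ^ 2 := by
    rw [Finset.sum_sub_distrib]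
    congr 1
    · simp [Finset.card_univ]
    · rw [← Finset.sum_div, ← Finset.mul_sum]
      congr 2
      rw [rho]
      apply Finset.sum_congr rfl
      intro b _
      ring
  rw [h1]
  field_simp


lemma contDiff_rho (i j : Fin N) : ContDiff ℝ (⊤ : ℕ∞) (rho i j : Conf d N → ℝ) := by
  apply ContDiff.sum
  intro b _
  exact ((Yc d i j b).contDiff).mul ((Yc d i j b).contDiff)

lemma isOpen_rho_ne (i j : Fin N) : IsOpen {x : Conf d N | rho i j x ≠ 0} :=
  isOpen_compl_singleton.preimage (contDiff_rho i j).continuous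

section WithU

variable {u : Conf d N → ℝ}

lemma eventually_zero {x : Conf d N} (hx : x ∉ tsupport u) :
    ∀ᶠ y in nhds x, u y = 0 := by
  filter_upwards [(isClosed_tsupport u).isOpen_compl.mem_nhds hx] with y hy
  exact image_eq_zero_of_notMem_tsupport hy

lemma fderiv_zero_of_nmem {x : Conf d N} (hx : x ∉ tsupport u) : fderiv ℝ u x = 0 := by
  have h : u =ᶠ[nhds x] (fun _ => 0) := eventually_zero hx
  rw [h.fderiv_eq, fderiv_fun_const]
  rfl

lemma cont_aux {i j : Fin N} (hts : tsupport u ⊆ {x : Conf d N | rho i j x ≠ 0})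
    {g : Conf d N → ℝ} (h1 : ContinuousOn g {x : Conf d N | rho i j x ≠ 0})
    (h0 : ∀ x ∉ tsupport u, g x = 0) : Continuous g := by
  rw [continuous_iff_continuousAt]
  intro x
  by_cases hx : rho i j x ≠ 0
  · exact h1.continuousAt ((isOpen_rho_ne i j).mem_nhds hx)
  · have hx' : x ∉ tsupport u := fun hmem => hx (hts hmem)
    have h : g =ᶠ[nhds x] (fun _ => 0) := by
      filter_upwards [(isClosed_tsupport u).isOpen_compl.mem_nhds hx'] with y hy
      exact h0 y hy
    exact ContinuousAt.congr (continuousAt_const) h.symm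

lemma integrable_aux (hu_cpt : HasCompactSupport u) {i j : Fin N}
    (hts : tsupport u ⊆ {x : Conf d N | rho i j x ≠ 0})
    {g : Conf d N → ℝ} (h1 : ContinuousOn g {x : Conf d N | rho i j x ≠ 0})
    (h0 : ∀ x ∉ tsupport u, g x = 0) : Integrable g := by
  apply (cont_aux hts h1 h0).integrable_of_hasCompactSupport
  apply hu_cpt.mono'
  intro x hx
  by_contra hxx
  exact hx (h0 x hxx)

lemma continuousOn_Gc (i j : Fin N) (c : Fin N × Fin d) :
    ContinuousOn (Gc i j c) {x : Conf d N | rho i j x ≠ 0} := by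
  apply ContinuousOn.div
  · exact (continuous_const.mul (Yc d i j c.2).continuous).continuousOn
  · exact (contDiff_rho i j).continuous.continuousOn
  · exact fun x hx => hx

lemma contDiff_fc (hu : ContDiff ℝ (⊤ : ℕ∞) u)
    {i j : Fin N} (hts : tsupport u ⊆ {x : Conf d N | rho i j x ≠ 0})
    (c : Fin N × Fin d) :
    ContDiff ℝ 1 (fun y : Conf d N => u y ^ 2 * Gc i j c y) := by
  rw [contDiff_iff_contDiffAt]
  intro x
  by_cases hx : rho i j x ≠ 0
  · have h1 : ContDiffAt ℝ 1 (fun y : Conf d N => u y ^ 2) x :=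
      ((hu.of_le (by simp)).contDiffAt).pow 2
    apply h1.mul
    apply ContDiffAt.div
    · exact (contDiff_const.mul (Yc d i j c.2).contDiff).of_le le_top |>.contDiffAt
    · exact ((contDiff_rho i j).of_le (by simp)).contDiffAt
    · exact hx
  · have hx' : x ∉ tsupport u := fun hmem => hx (hts hmem)
    apply ContDiffAt.congr_of_eventuallyEq (contDiffAt_const (c := (0:ℝ)))
    filter_upwards [(isClosed_tsupport u).isOpen_compl.mem_nhds hx'] with y hy
    rw [image_eq_zero_of_notMem_tsupport hy]
    ring

lemma cptsupp_fc (hu_cpt : HasCompactSupport u) {i j : Fin N} (c : Fin N × Fin d) :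
    HasCompactSupport (fun y : Conf d N => u y ^ 2 * Gc i j c y) := by
  apply hu_cpt.mono'
  intro x hx
  by_contra hxx
  apply hx
  show u x ^ 2 * Gc i j c x = 0
  rw [image_eq_zero_of_notMem_tsupport hxx]
  ring

noncomputable def Afun (u : Conf d N → ℝ) (i j : Fin N) (x : Conf d N) : ℝ :=
  ∑ c, fderiv ℝ u x (bvec d N c) * Gc i j c x

lemma hasFDerivAt_usq (hu : ContDiff ℝ (⊤ : ℕ∞) u) (x : Conf d N) :
    HasFDerivAt (fun y : Conf d N => u y ^ 2) ((2 * u x) • fderiv ℝ u x) x := by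
  have hux : HasFDerivAt u (fderiv ℝ u x) x :=
    (hu.differentiable (by simp) x).hasFDerivAt
  have h : HasFDerivAt (fun y : Conf d N => u y * u y) _ x := hux.mul hux
  have e1 : (fun y : Conf d N => u y ^ 2) = fun y => u y * u y := by
    funext y; ring
  rw [e1]
  rw [two_mul, add_smul]
  exact h

lemma div_identity (hu : ContDiff ℝ (⊤ : ℕ∞) u)
    {i j : Fin N} (hij : i ≠ j) (hts : tsupport u ⊆ {x : Conf d N | rho i j x ≠ 0})
    (x : Conf d N) :
    ∑ c, fderiv ℝ (fun y : Conf d N => u y ^ 2 * Gc i j c y) x (bvec d N c)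
      = 2 * u x * Afun u i j x + u x ^ 2 * (2 * ((d : ℝ) - 2) / rho i j x) := by
  by_cases hx : rho i j x ≠ 0
  · have hder : ∀ c, fderiv ℝ (fun y : Conf d N => u y ^ 2 * Gc i j c y) x
        = u x ^ 2 • Gd i j c x + Gc i j c x • ((2 * u x) • fderiv ℝ u x) := by
      intro c
      exact ((hasFDerivAt_usq hu x).mul (hasFDerivAt_Gc i j c x hx)).fderiv
    have : ∀ c, fderiv ℝ (fun y : Conf d N => u y ^ 2 * Gc i j c y) x (bvec d N c)
        = u x ^ 2 * Gd i j c x (bvec d N c)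
          + 2 * u x * (fderiv ℝ u x (bvec d N c) * Gc i j c x) := by
      intro c
      rw [hder c]
      simp only [ContinuousLinearMap.add_apply, ContinuousLinearMap.smul_apply, smul_eq_mul]
      ring
    rw [Finset.sum_congr rfl (fun c _ => this c), Finset.sum_add_distrib]
    rw [← Finset.mul_sum, ← Finset.mul_sum, sum_Gd_bvec i j hij x hx]
    rw [Afun]
    ring
  · have hx' : x ∉ tsupport u := fun hmem => hx (hts hmem)
    have hz : ∀ c : Fin N × Fin d,
        fderiv ℝ (fun y : Conf d N => u y ^ 2 * Gc i j c y) x = 0 := by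
      intro c
      have h : (fun y : Conf d N => u y ^ 2 * Gc i j c y) =ᶠ[nhds x] (fun _ => 0) := by
        filter_upwards [(isClosed_tsupport u).isOpen_compl.mem_nhds hx'] with y hy
        rw [image_eq_zero_of_notMem_tsupport hy]
        ring
      rw [h.fderiv_eq, fderiv_fun_const]
      rfl
    have hu0 : u x = 0 := image_eq_zero_of_notMem_tsupport hx'
    simp [hz, hu0]


lemma continuous_fderiv_apply (hu : ContDiff ℝ (⊤ : ℕ∞) u) (c : Fin N × Fin d) :
    Continuous (fun x : Conf d N => fderiv ℝ u x (bvec d N c)) := by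
  have hcd : Continuous (fderiv ℝ u) := hu.continuous_fderiv (by simp)
  exact (ContinuousLinearMap.apply ℝ ℝ (bvec d N c)).continuous.comp hcd

lemma continuousOn_Afun (hu : ContDiff ℝ (⊤ : ℕ∞) u) (i j : Fin N) :
    ContinuousOn (Afun u i j) {x : Conf d N | rho i j x ≠ 0} := by
  apply continuousOn_finset_sum
  intro c _
  exact ((continuous_fderiv_apply hu c).continuousOn).mul (continuousOn_Gc i j c)

variable (hu : ContDiff ℝ (⊤ : ℕ∞) u) (hu_cpt : HasCompactSupport u)

section Pair

variable {i j : Fin N} (hts : tsupport u ⊆ {x : Conf d N | rho i j x ≠ 0})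

include hu hu_cpt hts

lemma int_usq_div : Integrable (fun x : Conf d N => u x ^ 2 / rho i j x) := by
  apply integrable_aux hu_cpt hts
  · exact ContinuousOn.div ((hu.continuous.pow 2).continuousOn)
      ((contDiff_rho i j).continuous.continuousOn) (fun x hx => hx)
  · intro x hx
    rw [image_eq_zero_of_notMem_tsupport hx]
    simp

lemma int_uA : Integrable (fun x : Conf d N => u x * Afun u i j x) := by
  apply integrable_aux hu_cpt hts
  · exact (hu.continuous.continuousOn).mul (continuousOn_Afun hu i j)
  · intro x hx
    rw [image_eq_zero_of_notMem_tsupport hx]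
    simp

lemma int_Q : Integrable (fun x : Conf d N => Afun u i j x ^ 2 * rho i j x / 2) := by
  apply integrable_aux hu_cpt hts
  · exact (((continuousOn_Afun hu i j).pow 2).mul
      ((contDiff_rho i j).continuous.continuousOn)).div_const 2
  · intro x hx
    have hA : Afun u i j x = 0 := by
      simp [Afun, fderiv_zero_of_nmem hx]
    rw [hA]
    simp

lemma ibp (hij : i ≠ j) :
    ∫ x : Conf d N, u x * Afun u i j x
      = -((d : ℝ) - 2) * ∫ x : Conf d N, u x ^ 2 / rho i j x := by
  have hzero : ∀ c : Fin N × Fin d,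
      ∫ x : Conf d N, fderiv ℝ (fun y => u y ^ 2 * Gc i j c y) x (bvec d N c) = 0 := fun c =>
    integral_fderiv_apply_eq_zero (contDiff_fc hu hts c) (cptsupp_fc hu_cpt c) _
  have hintc : ∀ c : Fin N × Fin d,
      Integrable (fun x : Conf d N =>
        fderiv ℝ (fun y => u y ^ 2 * Gc i j c y) x (bvec d N c)) := by
    intro c
    have hcont : Continuous (fun x : Conf d N =>
        fderiv ℝ (fun y => u y ^ 2 * Gc i j c y) x (bvec d N c)) := by
      have h1 : Continuous (fderiv ℝ (fun y : Conf d N => u y ^ 2 * Gc i j c y)) :=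
        (contDiff_fc hu hts c).continuous_fderiv one_ne_zero
      exact (ContinuousLinearMap.apply ℝ ℝ (bvec d N c)).continuous.comp h1
    apply hcont.integrable_of_hasCompactSupport
    apply ((cptsupp_fc hu_cpt c).fderiv (𝕜 := ℝ)).mono'
    intro x hx
    apply subset_tsupport _
    simp only [Function.mem_support] at hx ⊢
    intro h0
    apply hx
    rw [h0]
    rfl
  have hsum : ∫ x : Conf d N,
      (∑ c : Fin N × Fin d,
        fderiv ℝ (fun y => u y ^ 2 * Gc i j c y) x (bvec d N c)) = 0 := by
    rw [integral_finset_sum _ (fun c _ => hintc c)]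
    exact Finset.sum_eq_zero (fun c _ => hzero c)
  have hrw : ∫ x : Conf d N,
      (2 * (u x * Afun u i j x) + (2 * ((d : ℝ) - 2)) * (u x ^ 2 / rho i j x)) = 0 := by
    rw [← hsum]
    apply integral_congr_ae
    filter_upwards with x
    rw [div_identity hu hij hts x]
    ring
  rw [integral_add ((int_uA hu hu_cpt hts).const_mul 2)
    ((int_usq_div hu hu_cpt hts).const_mul _), integral_const_mul, integral_const_mul] at hrw
  linarith

lemma pair_ineq (hij : i ≠ j) :
    ((d : ℝ) - 2) ^ 2 / 2 * ∫ x : Conf d N, u x ^ 2 / rho i j x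
      ≤ ∫ x : Conf d N, Afun u i j x ^ 2 * rho i j x / 2 := by
  have pointwise : ∀ x : Conf d N,
      0 ≤ Afun u i j x ^ 2 * rho i j x / 2 + (((d : ℝ) - 2) * (u x * Afun u i j x)
        + ((d : ℝ) - 2) ^ 2 / 2 * (u x ^ 2 / rho i j x)) := by
    intro x
    by_cases hx : rho i j x = 0
    · have hA : Afun u i j x = 0 := by
        simp [Afun, Gc, hx]
      simp [hA, hx]
    · have hpos : 0 < rho i j x := (rho_nonneg i j x).lt_of_ne (Ne.symm hx)
      have key : Afun u i j x ^ 2 * rho i j x / 2 + (((d : ℝ) - 2) * (u x * Afun u i j x)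
          + ((d : ℝ) - 2) ^ 2 / 2 * (u x ^ 2 / rho i j x))
          = (Afun u i j x * rho i j x + ((d : ℝ) - 2) * u x) ^ 2 / (2 * rho i j x) := by
        field_simp
        ring
      rw [key]
      positivity
  have h0 : (0:ℝ) ≤ ∫ x : Conf d N,
      (Afun u i j x ^ 2 * rho i j x / 2 + (((d : ℝ) - 2) * (u x * Afun u i j x)
        + ((d : ℝ) - 2) ^ 2 / 2 * (u x ^ 2 / rho i j x))) := integral_nonneg pointwise
  have e : ∫ x : Conf d N,
      (Afun u i j x ^ 2 * rho i j x / 2 + (((d : ℝ) - 2) * (u x * Afun u i j x)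
        + ((d : ℝ) - 2) ^ 2 / 2 * (u x ^ 2 / rho i j x)))
      = (∫ x : Conf d N, Afun u i j x ^ 2 * rho i j x / 2)
        + (((d : ℝ) - 2) * ∫ x : Conf d N, u x * Afun u i j x)
        + (((d : ℝ) - 2) ^ 2 / 2 * ∫ x : Conf d N, u x ^ 2 / rho i j x) := by
    have hg1 : Integrable (fun x : Conf d N => ((d:ℝ)-2) * (u x * Afun u i j x)) volume :=
      (int_uA hu hu_cpt hts).const_mul ((d:ℝ)-2)
    have hg2 : Integrable (fun x : Conf d N =>
        ((d:ℝ)-2)^2/2 * (u x ^ 2 / rho i j x)) volume :=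
      (int_usq_div hu hu_cpt hts).const_mul (((d:ℝ)-2)^2/2)
    have hg12 : Integrable (fun x : Conf d N => ((d:ℝ)-2) * (u x * Afun u i j x)
        + ((d:ℝ)-2)^2/2 * (u x ^ 2 / rho i j x)) volume := hg1.add hg2
    rw [integral_add (int_Q hu hu_cpt hts) hg12, integral_add hg1 hg2,
      integral_const_mul, integral_const_mul]
    ring
  rw [e, ibp hu hu_cpt hts hij] at h0
  nlinarith [h0]

end Pair

omit hu hu_cpt in
lemma Afun_eq {i j : Fin N} (hij : i ≠ j) (x : Conf d N) :
    Afun u i j x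
      = (∑ a, (fderiv ℝ u x (bvec d N (i, a)) - fderiv ℝ u x (bvec d N (j, a)))
          * Yc d i j a x) / rho i j x := by
  rw [Afun, Fintype.sum_prod_type, Finset.sum_comm, Finset.sum_div]
  apply Finset.sum_congr rfl
  intro a _
  have key : ∀ k : Fin N, fderiv ℝ u x (bvec d N (k, a)) * Gc i j (k, a) x
      = (if k = i then fderiv ℝ u x (bvec d N (k, a)) * (Yc d i j a x / rho i j x) else 0)
        - (if k = j then fderiv ℝ u x (bvec d N (k, a)) * (Yc d i j a x / rho i j x) else 0) := by
    intro k
    by_cases hk : k = i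
    · subst hk
      have : k ≠ j := hij
      simp [Gc, sgn, this]
      try ring
    · by_cases hk2 : k = j
      · subst hk2
        simp [Gc, sgn, hk]
        try ring
      · simp [Gc, sgn, hk, hk2]
  rw [Finset.sum_congr rfl (fun k _ => key k), Finset.sum_sub_distrib]
  rw [Finset.sum_ite_eq' Finset.univ i, Finset.sum_ite_eq' Finset.univ j]
  simp only [Finset.mem_univ, if_true]
  ring

omit hu hu_cpt in
lemma Q_le {i j : Fin N} (hij : i ≠ j) (x : Conf d N) :
    Afun u i j x ^ 2 * rho i j x / 2
      ≤ (∑ a, (fderiv ℝ u x (bvec d N (i, a)) - fderiv ℝ u x (bvec d N (j, a))) ^ 2) / 2 := by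
  set W : Fin d → ℝ :=
    fun a => fderiv ℝ u x (bvec d N (i, a)) - fderiv ℝ u x (bvec d N (j, a)) with hW
  by_cases hx : rho i j x = 0
  · rw [Afun_eq hij x, hx]
    simp only [div_zero, ne_eq, OfNat.ofNat_ne_zero, not_false_eq_true, zero_pow, zero_mul,
      zero_div]
    positivity
  · have hpos : 0 < rho i j x := (rho_nonneg i j x).lt_of_ne (Ne.symm hx)
    rw [Afun_eq hij x]
    set S : ℝ := ∑ a, W a * Yc d i j a x with hS
    have hCS : S ^ 2 ≤ (∑ a, W a ^ 2) * rho i j x := by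
      have h := Finset.sum_mul_sq_le_sq_mul_sq Finset.univ W (fun a => Yc d i j a x)
      have hr : ∑ a, (Yc d i j a x) ^ 2 = rho i j x := by
        rw [rho]
        exact Finset.sum_congr rfl fun b _ => by ring
      rw [hr] at h
      exact h
    have expand : (S / rho i j x) ^ 2 * rho i j x / 2 = S ^ 2 / (2 * rho i j x) := by
      field_simp
    rw [expand, div_le_div_iff₀ (by positivity) (by norm_num)]
    nlinarith [hCS, hpos]

lemma scalar_sum_sq (t : Fin N → ℝ) :
    ∑ i : Fin N, ∑ j ∈ Finset.Ioi i, (t i - t j) ^ 2 ≤ (N : ℝ) * ∑ k, t k ^ 2 := by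
  have full : ∀ i : Fin N, ∑ j : Fin N, (t i - t j) ^ 2
      = (N : ℝ) * t i ^ 2 - 2 * t i * (∑ k, t k) + ∑ k, t k ^ 2 := by
    intro i
    have h : ∀ j : Fin N, (t i - t j) ^ 2 = t i ^ 2 - 2 * t i * t j + t j ^ 2 :=
      fun j => by ring
    rw [Finset.sum_congr rfl (fun j _ => h j), Finset.sum_add_distrib,
      Finset.sum_sub_distrib, Finset.sum_const, Finset.card_univ, Fintype.card_fin,
      nsmul_eq_mul, ← Finset.mul_sum]
  have hT : ∑ i : Fin N, ∑ j : Fin N, (t i - t j) ^ 2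
      = 2 * (N : ℝ) * (∑ k, t k ^ 2) - 2 * (∑ k, t k) ^ 2 := by
    rw [Finset.sum_congr rfl (fun i _ => full i), Finset.sum_add_distrib,
      Finset.sum_sub_distrib, ← Finset.mul_sum, ← Finset.sum_mul, Finset.sum_const,
      Finset.card_univ, Fintype.card_fin, nsmul_eq_mul, ← Finset.mul_sum]
    ring
  have hsym : ∑ i : Fin N, ∑ j ∈ Finset.Ioi i, (t i - t j) ^ 2
      = ∑ i : Fin N, ∑ j ∈ Finset.Iio i, (t i - t j) ^ 2 := by
    rw [Finset.sum_comm' (t' := Finset.univ) (s' := fun y => Finset.Iio y)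
      (by intro x y; simp [Finset.mem_Ioi, Finset.mem_Iio])]
    apply Finset.sum_congr rfl
    intro i _
    apply Finset.sum_congr rfl
    intro j _
    ring
  have hhalf : ∀ i : Fin N,
      (∑ j ∈ Finset.Ioi i, (t i - t j) ^ 2) + (∑ j ∈ Finset.Iio i, (t i - t j) ^ 2)
        ≤ ∑ j : Fin N, (t i - t j) ^ 2 := by
    intro i
    have hdisj : Disjoint (Finset.Ioi i) (Finset.Iio i) := by
      rw [Finset.disjoint_left]
      intro j hj hj'
      rw [Finset.mem_Ioi] at hj
      rw [Finset.mem_Iio] at hj'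
      exact absurd hj (not_lt.mpr hj'.le)
    rw [← Finset.sum_union hdisj]
    apply Finset.sum_le_sum_of_subset_of_nonneg (Finset.subset_univ _)
    intro j _ _
    positivity
  have h2 : 2 * (∑ i : Fin N, ∑ j ∈ Finset.Ioi i, (t i - t j) ^ 2)
      ≤ ∑ i : Fin N, ∑ j : Fin N, (t i - t j) ^ 2 := by
    have := Finset.sum_le_sum (fun i (_ : i ∈ Finset.univ) => hhalf i)
    rw [Finset.sum_add_distrib] at this
    rw [← hsym] at this
    linarith
  rw [hT] at h2
  nlinarith [sq_nonneg (∑ k, t k), h2]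

omit hu_cpt in
include hu in
lemma grad_norm_sq (x : Conf d N) :
    ‖gradient u x‖ ^ 2 = ∑ c, (fderiv ℝ u x (bvec d N c)) ^ 2 := by
  rw [PiLp.norm_sq_eq_of_L2]
  apply Finset.sum_congr rfl
  intro c _
  have h1 : gradient u x c = fderiv ℝ u x (bvec d N c) := by
    have h := InnerProductSpace.toDual_symm_apply (𝕜 := ℝ) (E := Conf d N)
      (y := fderiv ℝ u x) (x := bvec d N c)
    rw [show ((InnerProductSpace.toDual ℝ (Conf d N)).symm (fderiv ℝ u x)) = gradient u x
      from rfl] at h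
    rw [← h, bvec]
    rw [EuclideanSpace.inner_single_right]
    simp
  rw [h1, Real.norm_eq_abs, sq_abs]

omit hu_cpt in
include hu in
lemma sum_Q_le (x : Conf d N) :
    ∑ i : Fin N, ∑ j ∈ Finset.Ioi i, Afun u i j x ^ 2 * rho i j x / 2
      ≤ (N : ℝ) / 2 * ‖gradient u x‖ ^ 2 := by
  have step1 : ∑ i : Fin N, ∑ j ∈ Finset.Ioi i, Afun u i j x ^ 2 * rho i j x / 2
      ≤ ∑ i : Fin N, ∑ j ∈ Finset.Ioi i,
          (∑ a, (fderiv ℝ u x (bvec d N (i, a)) - fderiv ℝ u x (bvec d N (j, a))) ^ 2) / 2 := by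
    apply Finset.sum_le_sum
    intro i _
    apply Finset.sum_le_sum
    intro j hj
    have hij : i ≠ j := ne_of_lt (Finset.mem_Ioi.mp hj)
    exact Q_le (u := u) hij x
  have step2 : ∑ i : Fin N, ∑ j ∈ Finset.Ioi i,
      (∑ a, (fderiv ℝ u x (bvec d N (i, a)) - fderiv ℝ u x (bvec d N (j, a))) ^ 2) / 2
      = (∑ a : Fin d, ∑ i : Fin N, ∑ j ∈ Finset.Ioi i,
          (fderiv ℝ u x (bvec d N (i, a)) - fderiv ℝ u x (bvec d N (j, a))) ^ 2) / 2 := by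
    simp only [← Finset.sum_div]
    congr 1
    rw [Finset.sum_congr rfl (fun i (_ : i ∈ Finset.univ) => Finset.sum_comm)]
    exact Finset.sum_comm
  have step3 : ∀ a : Fin d,
      ∑ i : Fin N, ∑ j ∈ Finset.Ioi i,
        (fderiv ℝ u x (bvec d N (i, a)) - fderiv ℝ u x (bvec d N (j, a))) ^ 2
        ≤ (N : ℝ) * ∑ k : Fin N, (fderiv ℝ u x (bvec d N (k, a))) ^ 2 :=
    fun a => scalar_sum_sq (fun k => fderiv ℝ u x (bvec d N (k, a)))
  have step4 : ∑ a : Fin d, ∑ i : Fin N, ∑ j ∈ Finset.Ioi i,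
      (fderiv ℝ u x (bvec d N (i, a)) - fderiv ℝ u x (bvec d N (j, a))) ^ 2
      ≤ (N : ℝ) * ∑ c, (fderiv ℝ u x (bvec d N c)) ^ 2 := by
    calc ∑ a : Fin d, ∑ i : Fin N, ∑ j ∈ Finset.Ioi i,
        (fderiv ℝ u x (bvec d N (i, a)) - fderiv ℝ u x (bvec d N (j, a))) ^ 2
        ≤ ∑ a : Fin d, (N : ℝ) * ∑ k : Fin N, (fderiv ℝ u x (bvec d N (k, a))) ^ 2 :=
          Finset.sum_le_sum (fun a _ => step3 a)
      _ = (N : ℝ) * ∑ c, (fderiv ℝ u x (bvec d N c)) ^ 2 := by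
          rw [← Finset.mul_sum]
          congr 1
          rw [Fintype.sum_prod_type]
          exact Finset.sum_comm
  rw [grad_norm_sq hu x]
  have hfin : (∑ a : Fin d, ∑ i : Fin N, ∑ j ∈ Finset.Ioi i,
      (fderiv ℝ u x (bvec d N (i, a)) - fderiv ℝ u x (bvec d N (j, a))) ^ 2) / 2
      ≤ (N : ℝ) / 2 * ∑ c, (fderiv ℝ u x (bvec d N c)) ^ 2 := by
    linarith [step4]
  exact le_trans (step1.trans (le_of_eq step2)) hfin


include hu hu_cpt in
lemma int_grad : Integrable (fun x : Conf d N => ‖gradient u x‖ ^ 2) := by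
  have hcd : Continuous (fderiv ℝ u) := hu.continuous_fderiv (by simp)
  have hcg : Continuous (fun x : Conf d N => gradient u x) :=
    (InnerProductSpace.toDual ℝ (Conf d N)).symm.continuous.comp hcd
  apply ((hcg.norm.pow 2)).integrable_of_hasCompactSupport
  apply hu_cpt.mono'
  intro x hx
  by_contra hxx
  apply hx
  show ‖gradient u x‖ ^ 2 = 0
  have : gradient u x = 0 := by
    show (InnerProductSpace.toDual ℝ (Conf d N)).symm (fderiv ℝ u x) = 0
    rw [fderiv_zero_of_nmem hxx, map_zero]
  rw [this]
  simp

end WithU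

end MPH

/-- **Many-particle Hardy inequality with explicit constant.** For `d ≥ 3`, `N ≥ 2`,
`Ω := {x ∈ (ℝ^d)^N : x_i ≠ x_j ∀ i ≠ j}` and every `u ∈ C₀^∞(Ω)`:
`∫_Ω |∇u|² ≥ ((d−2)²/N) Σ_{i<j} ∫_Ω |u|²/|x_i − x_j|²`. -/
theorem many_particle_hardy_inequality (d N : ℕ) (hd : 3 ≤ d) (hN : 2 ≤ N)
    (u : EuclideanSpace ℝ (Fin N × Fin d) → ℝ) (hu : ContDiff ℝ (⊤ : ℕ∞) u)
    (hu_cpt : HasCompactSupport u)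
    (hu_supp : tsupport u ⊆
      {x : EuclideanSpace ℝ (Fin N × Fin d) | ∀ i j, i ≠ j → particle x i ≠ particle x j}) :
    (∫ x in {x : EuclideanSpace ℝ (Fin N × Fin d) |
        ∀ i j, i ≠ j → particle x i ≠ particle x j},
        ‖gradient u x‖ ^ 2)
      ≥ ((d : ℝ) - 2) ^ 2 / N *
          ∑ i : Fin N, ∑ j ∈ Finset.Ioi i,
            ∫ x in {x : EuclideanSpace ℝ (Fin N × Fin d) |
              ∀ i j, i ≠ j → particle x i ≠ particle x j},
              |u x| ^ 2 / ‖particle x i - particle x j‖ ^ 2 := by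
  classical
  set Ω : Set (EuclideanSpace ℝ (Fin N × Fin d)) :=
    {x | ∀ i j, i ≠ j → particle x i ≠ particle x j} with hΩ
  have hts : ∀ (i j : Fin N), i ≠ j →
      tsupport u ⊆ {x : MPH.Conf d N | MPH.rho i j x ≠ 0} := by
    intro i j hij x hx
    have hmem := hu_supp hx
    simp only [Set.mem_setOf_eq]
    intro h0
    exact (hmem i j hij) ((MPH.rho_eq_zero_iff i j x).mp h0)
  have hnot : ∀ x, x ∉ Ω → x ∉ tsupport u := fun x hx hmem => hx (hu_supp hmem)
  -- LHS conversion
  have hLHS : (∫ x in Ω, ‖gradient u x‖ ^ 2)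
      = ∫ x : MPH.Conf d N, ‖gradient u x‖ ^ 2 := by
    apply setIntegral_eq_integral_of_forall_compl_eq_zero
    intro x hx
    have hx' := hnot x hx
    have : gradient u x = 0 := by
      show (InnerProductSpace.toDual ℝ (MPH.Conf d N)).symm (fderiv ℝ u x) = 0
      rw [MPH.fderiv_zero_of_nmem hx', map_zero]
    rw [this]
    simp
  -- RHS conversion
  have hRHS : ∀ (i j : Fin N), i ≠ j →
      (∫ x in Ω, |u x| ^ 2 / ‖particle x i - particle x j‖ ^ 2)
        = ∫ x : MPH.Conf d N, u x ^ 2 / MPH.rho i j x := by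
    intro i j hij
    rw [setIntegral_eq_integral_of_forall_compl_eq_zero (f := fun x =>
      |u x| ^ 2 / ‖particle x i - particle x j‖ ^ 2)]
    · apply integral_congr_ae
      filter_upwards with x
      rw [sq_abs, MPH.rho_eq_norm]
    · intro x hx
      rw [image_eq_zero_of_notMem_tsupport (hnot x hx)]
      simp
  rw [hLHS]
  have hsum_eq : ∑ i : Fin N, ∑ j ∈ Finset.Ioi i,
      (∫ x in Ω, |u x| ^ 2 / ‖particle x i - particle x j‖ ^ 2)
      = ∑ i : Fin N, ∑ j ∈ Finset.Ioi i, ∫ x : MPH.Conf d N, u x ^ 2 / MPH.rho i j x := by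
    apply Finset.sum_congr rfl
    intro i _
    apply Finset.sum_congr rfl
    intro j hj
    exact hRHS i j (ne_of_lt (Finset.mem_Ioi.mp hj))
  rw [hsum_eq]
  -- main chain
  set I : ℝ := ∫ x : MPH.Conf d N, ‖gradient u x‖ ^ 2 with hI
  set S : ℝ := ∑ i : Fin N, ∑ j ∈ Finset.Ioi i,
    ∫ x : MPH.Conf d N, u x ^ 2 / MPH.rho i j x with hS
  have hQint : ∀ (i j : Fin N), i ≠ j →
      Integrable (fun x : MPH.Conf d N => MPH.Afun u i j x ^ 2 * MPH.rho i j x / 2) :=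
    fun i j hij => MPH.int_Q hu hu_cpt (hts i j hij)
  have hIok : ∀ i : Fin N, Integrable (fun x : MPH.Conf d N =>
      ∑ j ∈ Finset.Ioi i, MPH.Afun u i j x ^ 2 * MPH.rho i j x / 2) := by
    intro i
    apply integrable_finset_sum
    intro j hj
    exact hQint i j (ne_of_lt (Finset.mem_Ioi.mp hj))
  have h1 : ∑ i : Fin N, ∑ j ∈ Finset.Ioi i,
      (∫ x : MPH.Conf d N, MPH.Afun u i j x ^ 2 * MPH.rho i j x / 2)
      ≤ (N : ℝ) / 2 * I := by
    calc ∑ i : Fin N, ∑ j ∈ Finset.Ioi i,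
        (∫ x : MPH.Conf d N, MPH.Afun u i j x ^ 2 * MPH.rho i j x / 2)
        = ∑ i : Fin N, ∫ x : MPH.Conf d N,
            (∑ j ∈ Finset.Ioi i, MPH.Afun u i j x ^ 2 * MPH.rho i j x / 2) := by
          apply Finset.sum_congr rfl
          intro i _
          exact (integral_finset_sum _ (fun j hj =>
            hQint i j (ne_of_lt (Finset.mem_Ioi.mp hj)))).symm
      _ = ∫ x : MPH.Conf d N, (∑ i : Fin N,
            ∑ j ∈ Finset.Ioi i, MPH.Afun u i j x ^ 2 * MPH.rho i j x / 2) :=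
          (integral_finset_sum _ (fun i _ => hIok i)).symm
      _ ≤ ∫ x : MPH.Conf d N, (N : ℝ) / 2 * ‖gradient u x‖ ^ 2 := by
          apply integral_mono (integrable_finset_sum _ (fun i _ => hIok i))
            ((MPH.int_grad hu hu_cpt).const_mul _)
          intro x
          exact MPH.sum_Q_le hu x
      _ = (N : ℝ) / 2 * I := by rw [integral_const_mul]
  have h2 : ((d : ℝ) - 2) ^ 2 / 2 * S ≤ ∑ i : Fin N, ∑ j ∈ Finset.Ioi i,
      (∫ x : MPH.Conf d N, MPH.Afun u i j x ^ 2 * MPH.rho i j x / 2) := by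
    rw [hS, Finset.mul_sum]
    apply Finset.sum_le_sum
    intro i _
    rw [Finset.mul_sum]
    apply Finset.sum_le_sum
    intro j hj
    exact MPH.pair_ineq hu hu_cpt (hts i j (ne_of_lt (Finset.mem_Ioi.mp hj)))
      (ne_of_lt (Finset.mem_Ioi.mp hj))
  have hNpos : (0 : ℝ) < N := by
    have : (2 : ℝ) ≤ N := by exact_mod_cast hN
    linarith
  have key : ((d : ℝ) - 2) ^ 2 / 2 * S ≤ (N : ℝ) / 2 * I := le_trans h2 h1
  rw [ge_iff_le]
  calc ((d : ℝ) - 2) ^ 2 / N * S = 2 / N * (((d : ℝ) - 2) ^ 2 / 2 * S) := by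
        field_simp
    _ ≤ 2 / N * ((N : ℝ) / 2 * I) := by
        apply mul_le_mul_of_nonneg_left key
        positivity
    _ = I := by
        field_simp
end

section
/- Many-particle-type Hardy GSR for the product of coordinates: Let N ≥ 1 and Ω := { (x₁,…,x_N) ∈ ℝ^N : x₁·x₂·…·x_N ≠ 0 }. Set f(x) := ( Π_{k=1}^{N} |x_k| )·|x|^{2(1−N)}, where |x|² = Σ_k x_k². Then for every smooth u : ℝ^N → ℝ with compact support in Ω, ∫_Ω |∇u|² dx − ∫_Ω ( (1/4)·Σ_{k=1}^{N} 1/x_k² + (N−1)²/|x|² )·|u|² dx = ∫_Ω |∇(f^{−1/2}u)|²·f dx, and in particular the left-hand side is ≥ 0. -/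
open MeasureTheory Real Finset
open scoped Classical

lemma scalar_key (m : ℕ) (x a : Fin m → ℝ) (uu q : ℝ) (hq : q ≠ 0)
    (hx : ∀ i, x i ≠ 0) (hsum : ∑ i, (x i)^2 = q) :
    (∑ i, (a i)^2) - ((1/4) * ∑ i, 1/(x i)^2 + ((m:ℝ)-1)^2/q) * uu^2
    = (∑ i, (a i - (uu/2) * ((x i)⁻¹ + 2*(1-(m:ℝ))*(x i)/q))^2)
      + ∑ i, (2 * uu * a i * ((2*(x i))⁻¹ + (1-(m:ℝ))*(x i)/q)
          + uu^2 * (-(1/(2*(x i)^2)) + (1-(m:ℝ))/q - 2*(1-(m:ℝ))*(x i)^2/q^2)) := by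
  set c : ℝ := 1 - (m:ℝ) with hc
  have per : ∀ i ∈ univ, (a i - (uu/2) * ((x i)⁻¹ + 2*c*(x i)/q))^2
      + (2 * uu * a i * ((2*(x i))⁻¹ + c*(x i)/q)
          + uu^2 * (-(1/(2*(x i)^2)) + c/q - 2*c*(x i)^2/q^2))
      = (a i)^2 - (uu^2/4) * (1/(x i)^2) + (2*c*uu^2/q)
        + ((c^2 - 2*c)*uu^2/q^2) * (x i)^2 := by
    intro i _
    have hxi := hx i
    field_simp
    ring
  symm
  calc (∑ i, (a i - (uu/2) * ((x i)⁻¹ + 2*c*(x i)/q))^2)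
      + ∑ i, (2 * uu * a i * ((2*(x i))⁻¹ + c*(x i)/q)
          + uu^2 * (-(1/(2*(x i)^2)) + c/q - 2*c*(x i)^2/q^2))
      = ∑ i, ((a i)^2 - (uu^2/4) * (1/(x i)^2) + (2*c*uu^2/q)
        + ((c^2 - 2*c)*uu^2/q^2) * (x i)^2) := by
        rw [← Finset.sum_add_distrib]
        exact Finset.sum_congr rfl per
    _ = (∑ i, (a i)^2) - (uu^2/4) * (∑ i, 1/(x i)^2) + (2*c*uu^2/q) * m
        + ((c^2 - 2*c)*uu^2/q^2) * q := by
        rw [Finset.sum_add_distrib, Finset.sum_add_distrib, Finset.sum_sub_distrib,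
          ← Finset.mul_sum, ← Finset.mul_sum, Finset.sum_const, card_univ, Fintype.card_fin,
          hsum]
        push_cast
        ring
    _ = (∑ i, (a i)^2) - ((1/4) * ∑ i, 1/(x i)^2 + ((m:ℝ)-1)^2/q) * uu^2 := by
        have hm : ((m:ℝ)-1) = -c := by rw [hc]; ring
        rw [hm]
        field_simp
        ring

lemma clm_norm_sq {m : ℕ} (T : EuclideanSpace ℝ (Fin m) →L[ℝ] ℝ) :
    ‖T‖^2 = ∑ i, (T (EuclideanSpace.single i (1:ℝ)))^2 := by
  set t := (InnerProductSpace.toDual ℝ (EuclideanSpace ℝ (Fin m))).symm T with ht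
  have h1 : ‖T‖ = ‖t‖ := (LinearIsometryEquiv.norm_map _ _).symm
  have h2 : ∀ i, t i = T (EuclideanSpace.single i 1) := by
    intro i
    have h : @inner ℝ _ _ t (EuclideanSpace.single i (1:ℝ)) = T (EuclideanSpace.single i 1) :=
      InnerProductSpace.toDual_symm_apply
    rw [← h, real_inner_comm, EuclideanSpace.inner_single_left]
    simp
  rw [h1, EuclideanSpace.norm_eq, Real.sq_sqrt (by positivity)]
  simp [h2, sq_abs]

lemma grad_norm_sq {m : ℕ} (w : EuclideanSpace ℝ (Fin m) → ℝ) (x) :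
    ‖gradient w x‖^2 = ∑ i, (fderiv ℝ w x (EuclideanSpace.single i (1:ℝ)))^2 := by
  rw [gradient]
  rw [show ‖(InnerProductSpace.toDual ℝ _).symm (fderiv ℝ w x)‖ = ‖fderiv ℝ w x‖ from
    LinearIsometryEquiv.norm_map _ _]
  exact clm_norm_sq _

lemma compl_null (m : ℕ) :
    volume ({x : EuclideanSpace ℝ (Fin m) | ∀ k, x k ≠ 0}ᶜ) = 0 := by
  have : {x : EuclideanSpace ℝ (Fin m) | ∀ k, x k ≠ 0}ᶜ = ⋃ k, {x | x k = 0} := by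
    ext x; simp [Set.mem_iUnion]
  rw [this]
  refine measure_iUnion_null fun k => ?_
  have : {x : EuclideanSpace ℝ (Fin m) | x k = 0}
      = (LinearMap.ker (EuclideanSpace.projₗ (𝕜 := ℝ) k) : Set (EuclideanSpace ℝ (Fin m))) := by
    ext x; simp [LinearMap.mem_ker]
  rw [this]
  apply MeasureTheory.Measure.addHaar_submodule
  intro h
  have := h ▸ Submodule.mem_top (x := EuclideanSpace.single k (1:ℝ)) (R := ℝ)
  rw [LinearMap.mem_ker] at this
  simp at this

lemma div_int_zero {m : ℕ} (F : Fin (m+1) → (Fin (m+1) → ℝ) → ℝ)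
    (F' : Fin (m+1) → (Fin (m+1) → ℝ) → ((Fin (m+1) → ℝ) →L[ℝ] ℝ))
    (hd : ∀ i x, HasFDerivAt (F i) (F' i x) x)
    (hcont : Continuous fun x => ∑ i, F' i x (Pi.single i 1))
    {K : Set (Fin (m+1) → ℝ)} (hK : IsCompact K) (hKc : IsClosed K)
    (hsupp : ∀ i, ∀ x, x ∉ K → F i x = 0) :
    ∫ x, ∑ i, F' i x (Pi.single i 1) = 0 := by
  obtain ⟨R, hR⟩ := hK.isBounded.subset_closedBall 0
  set R' : ℝ := max R 0 + 1 with hR'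
  have hRR' : R ≤ max R 0 := le_max_left _ _
  have hxK : ∀ x ∈ K, ∀ i, |x i| ≤ max R 0 := by
    intro x hx i
    have h1 : ‖x‖ ≤ R := by simpa [Metric.mem_closedBall] using hR hx
    have h2 : |x i| ≤ ‖x‖ := by
      simpa [Real.norm_eq_abs] using norm_le_pi_norm x i
    linarith
  -- points with some coordinate of absolute value R' are not in K
  have hnotK : ∀ x : Fin (m+1) → ℝ, (∃ i, |x i| = R') → x ∉ K := by
    rintro x ⟨i, hi⟩ hx
    have := hxK x hx i
    rw [hi] at this; linarith
  set a : Fin (m+1) → ℝ := fun _ => -R' with ha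
  set b : Fin (m+1) → ℝ := fun _ => R' with hb
  have hle : a ≤ b := fun i => by
    simp only [ha, hb]; nlinarith [le_max_right R 0]
  have hzero : ∀ x ∉ Set.Icc a b, (∑ i, F' i x (Pi.single i 1)) = 0 := by
    intro x hx
    have hxnK : x ∉ K := by
      intro hxK'
      refine hx ⟨fun i => ?_, fun i => ?_⟩ <;>
      · have := hxK x hxK' i
        simp only [ha, hb]
        cases abs_le.1 this with
        | intro h1 h2 => nlinarith [le_max_right R 0]
    have hF'0 : ∀ i, F' i x = 0 := by
      intro i
      have hev : F i =ᶠ[nhds x] (fun _ => (0:ℝ)) := by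
        have : Kᶜ ∈ nhds x := hKc.isOpen_compl.mem_nhds hxnK
        filter_upwards [this] with y hy using hsupp i y hy
      have h1 : fderiv ℝ (F i) x = F' i x := (hd i x).fderiv
      have h2 : fderiv ℝ (F i) x = fderiv ℝ (fun _ => (0:ℝ)) x := hev.fderiv_eq
      rw [← h1, h2, fderiv_fun_const]; rfl
    simp [hF'0]
  have hKIcc : K ⊆ Set.Icc a b := by
    intro x hx
    constructor <;> intro i <;>
    · have := abs_le.1 (hxK x hx i)
      simp only [ha, hb]
      nlinarith [le_max_right R 0, this.1, this.2]
  rw [← setIntegral_eq_integral_of_forall_compl_eq_zero hzero]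
  rw [integral_divergence_of_hasFDerivAt_off_countable' a b hle F F' ∅
    Set.countable_empty (fun i x _ => ((hd i x).continuousAt.continuousWithinAt))
    (fun x _ i => hd i x) (hcont.continuousOn.integrableOn_compact isCompact_Icc)]
  refine Finset.sum_eq_zero fun i _ => ?_
  have hfront : ∀ y : Fin m → ℝ, F i (Fin.insertNth i (b i) y) = 0 := fun y =>
    hsupp i _ (hnotK _ ⟨i, by simp [Fin.insertNth_apply_same, hb]; positivity⟩)
  have hback : ∀ y : Fin m → ℝ, F i (Fin.insertNth i (a i) y) = 0 := fun y =>
    hsupp i _ (hnotK _ ⟨i, by simp [Fin.insertNth_apply_same, ha]; positivity⟩)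
  simp [hfront, hback]

lemma div_int_zero_eucl {m : ℕ}
    (F : Fin (m+1) → EuclideanSpace ℝ (Fin (m+1)) → ℝ)
    (F' : Fin (m+1) → EuclideanSpace ℝ (Fin (m+1)) → (EuclideanSpace ℝ (Fin (m+1)) →L[ℝ] ℝ))
    (hd : ∀ i x, HasFDerivAt (F i) (F' i x) x)
    (hcont : Continuous fun x => ∑ i, F' i x (EuclideanSpace.single i (1:ℝ)))
    {K : Set (EuclideanSpace ℝ (Fin (m+1)))} (hK : IsCompact K) (hKc : IsClosed K)
    (hsupp : ∀ i, ∀ x, x ∉ K → F i x = 0) :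
    ∫ x, ∑ i, F' i x (EuclideanSpace.single i (1:ℝ)) = 0 := by
  set L := PiLp.continuousLinearEquiv 2 ℝ (fun _ : Fin (m+1) => ℝ) with hL
  have key : ∫ y : Fin (m+1) → ℝ,
      ∑ i, (F' i (L.symm y)) (EuclideanSpace.single i (1:ℝ)) = 0 := by
    have hsingle : ∀ i, (EuclideanSpace.single i (1:ℝ)) = L.symm (Pi.single i 1) := fun i => rfl
    refine div_int_zero (fun i y => F i (L.symm y))
      (fun i y => (F' i (L.symm y)).comp (L.symm : (Fin (m+1) → ℝ) →L[ℝ] _))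
      (fun i y => HasFDerivAt.comp y (hd i (L.symm y)) (L.symm.hasFDerivAt))
      ?_ (K := ⇑L '' K) (hK.image L.continuous) (L.toHomeomorph.isClosedMap K hKc) ?_
    · simpa [hsingle, Function.comp_def] using hcont.comp (L.symm.continuous)
    · intro i x hx
      refine hsupp i _ (fun hmem => hx ?_)
      exact ⟨L.symm x, hmem, by simp⟩
  have := (EuclideanSpace.volume_preserving_symm_measurableEquiv_toLp (Fin (m+1))).symm
  rw [← this.integral_comp (MeasurableEquiv.measurableEmbedding _)
    (fun x => ∑ i, F' i x (EuclideanSpace.single i (1:ℝ)))]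
  exact key

noncomputable section HardyAux

variable {m : ℕ}

def Om (m : ℕ) : Set (EuclideanSpace ℝ (Fin m)) := {x | ∀ k, x k ≠ 0}

def Qf (x : EuclideanSpace ℝ (Fin m)) : ℝ := ∑ k, (x k)^2
def Pf (x : EuclideanSpace ℝ (Fin m)) : ℝ := ∏ k, |x k|
def cst (m : ℕ) : ℝ := 1 - m
def f0 (x : EuclideanSpace ℝ (Fin m)) : ℝ := Pf x * Qf x ^ cst m
def Sder (x : EuclideanSpace ℝ (Fin m)) : EuclideanSpace ℝ (Fin m) →L[ℝ] ℝ :=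
  ∑ k, (2 * x k) • EuclideanSpace.proj k
lemma isOpen_Om : IsOpen (Om m) := by
  have : Om m = ⋂ k, (fun x : EuclideanSpace ℝ (Fin m) => x k) ⁻¹' {0}ᶜ := by
    ext x; simp [Om]
  rw [this]
  exact isOpen_iInter_of_finite fun k =>
    (isOpen_compl_singleton).preimage (EuclideanSpace.proj (𝕜 := ℝ) k).continuous

lemma Qf_pos (hm : 0 < m) {x : EuclideanSpace ℝ (Fin m)} (hx : x ∈ Om m) : 0 < Qf x := by
  have hle : (x ⟨0, hm⟩)^2 ≤ Qf x :=
    Finset.single_le_sum (f := fun k => (x k)^2) (fun k _ => sq_nonneg _) (mem_univ _)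
  have h2 : x ⟨0, hm⟩ ≠ 0 := hx ⟨0, hm⟩
  have : 0 < (x ⟨0, hm⟩)^2 := by positivity
  linarith

lemma Pf_pos {x : EuclideanSpace ℝ (Fin m)} (hx : x ∈ Om m) : 0 < Pf x :=
  Finset.prod_pos fun k _ => abs_pos.2 (hx k)

lemma f0_pos (hm : 0 < m) {x : EuclideanSpace ℝ (Fin m)} (hx : x ∈ Om m) : 0 < f0 x :=
  mul_pos (Pf_pos hx) (Real.rpow_pos_of_pos (Qf_pos hm hx) _)

lemma proj_apply (i : Fin m) (x : EuclideanSpace ℝ (Fin m)) :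
    EuclideanSpace.proj (𝕜 := ℝ) i x = x i := rfl

lemma hasFDerivAt_coord (i : Fin m) (x : EuclideanSpace ℝ (Fin m)) :
    HasFDerivAt (fun y : EuclideanSpace ℝ (Fin m) => y i)
      (EuclideanSpace.proj (𝕜 := ℝ) i) x :=
  (EuclideanSpace.proj (𝕜 := ℝ) i).hasFDerivAt

lemma hasFDerivAt_Qf (x : EuclideanSpace ℝ (Fin m)) : HasFDerivAt Qf (Sder x) x := by
  have : HasFDerivAt (fun y : EuclideanSpace ℝ (Fin m) => ∑ k, (y k)^2)
      (∑ k, (2 * x k) • EuclideanSpace.proj (𝕜 := ℝ) k) x := by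
    apply HasFDerivAt.fun_sum
    intro k _
    have h1 := (hasDerivAt_pow 2 (x k)).comp_hasFDerivAt x (hasFDerivAt_coord k x)
    simpa [pow_one, mul_comm, Function.comp_def] using h1
  exact this

lemma hasFDerivAt_Pf {x : EuclideanSpace ℝ (Fin m)} (hx : x ∈ Om m) :
    HasFDerivAt Pf (∑ k, (Pf x / x k) • EuclideanSpace.proj (𝕜 := ℝ) k) x := by
  have habs : ∀ k : Fin m, HasFDerivAt (fun y : EuclideanSpace ℝ (Fin m) => |y k|)
      ((SignType.sign (x k) : ℝ) • EuclideanSpace.proj (𝕜 := ℝ) k) x := fun k =>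
    by have h := (hasDerivAt_abs (hx k)).comp_hasFDerivAt x (hasFDerivAt_coord k x); exact h
  have h := HasFDerivAt.finset_prod (u := univ) (fun k _ => habs k)
  have hco : ∀ k : Fin m,
      (∏ j ∈ univ.erase k, |x j|) • ((SignType.sign (x k) : ℝ) • EuclideanSpace.proj (𝕜 := ℝ) k)
        = (Pf x / x k) • EuclideanSpace.proj (𝕜 := ℝ) k := by
    intro k
    rw [smul_smul]
    congr 1
    have h1 : Pf x = |x k| * ∏ j ∈ univ.erase k, |x j| :=
      (Finset.mul_prod_erase univ (fun j => |x j|) (mem_univ k)).symm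
    rcases lt_or_gt_of_ne (hx k) with hlt | hgt
    · rw [h1, abs_of_neg hlt]
      rw [show SignType.sign (x k) = -1 from sign_neg hlt]
      rw [eq_div_iff (hx k)]
      simp only [SignType.coe_neg, SignType.coe_one]
      ring
    · rw [h1, abs_of_pos hgt]
      rw [show SignType.sign (x k) = 1 from sign_pos hgt]
      rw [eq_div_iff (hx k)]
      simp only [SignType.coe_neg, SignType.coe_one]
      ring
  have h2 : HasFDerivAt (fun y : EuclideanSpace ℝ (Fin m) => ∏ k, |y k|)
      (∑ i : Fin m, (∏ j ∈ univ.erase i, |x j|) •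
        ((SignType.sign (x i) : ℝ) • EuclideanSpace.proj (𝕜 := ℝ) i)) x := h
  have h3 := Finset.sum_congr rfl (fun k (_ : k ∈ univ) => hco k)
  rw [h3] at h2
  exact h2


-- `vfun` and the canonical derivatives
def Df0 (x : EuclideanSpace ℝ (Fin m)) : EuclideanSpace ℝ (Fin m) →L[ℝ] ℝ :=
  Pf x • ((cst m * Qf x ^ (cst m - 1)) • Sder x)
    + (Qf x ^ cst m) • (∑ k, (Pf x / x k) • EuclideanSpace.proj k)

lemma hasFDerivAt_f0 (hm : 0 < m) {x : EuclideanSpace ℝ (Fin m)} (hx : x ∈ Om m) :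
    HasFDerivAt f0 (Df0 x) x := by
  have hQ := hasFDerivAt_Qf x
  have hrpow : HasFDerivAt (fun y : EuclideanSpace ℝ (Fin m) => Qf y ^ cst m)
      ((cst m * Qf x ^ (cst m - 1)) • Sder x) x :=
    (Real.hasDerivAt_rpow_const (Or.inl (Qf_pos hm hx).ne')).comp_hasFDerivAt x hQ
  exact (hasFDerivAt_Pf hx).mul hrpow

def vfun (u : EuclideanSpace ℝ (Fin m) → ℝ) (y : EuclideanSpace ℝ (Fin m)) : ℝ :=
  f0 y ^ (-(1/2) : ℝ) * u y

def Vder (u : EuclideanSpace ℝ (Fin m) → ℝ) (x : EuclideanSpace ℝ (Fin m)) :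
    EuclideanSpace ℝ (Fin m) →L[ℝ] ℝ :=
  (f0 x ^ (-(1/2) : ℝ)) • fderiv ℝ u x
    + u x • ((-(1/2) * f0 x ^ (-(1/2) - 1 : ℝ)) • Df0 x)

lemma hasFDerivAt_vfun (hm : 0 < m) {u : EuclideanSpace ℝ (Fin m) → ℝ}
    (hu : Differentiable ℝ u) {x : EuclideanSpace ℝ (Fin m)} (hx : x ∈ Om m) :
    HasFDerivAt (vfun u) (Vder u x) x := by
  have h1 : HasFDerivAt (fun y : EuclideanSpace ℝ (Fin m) => f0 y ^ (-(1/2) : ℝ))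
      ((-(1/2) * f0 x ^ (-(1/2) - 1 : ℝ)) • Df0 x) x :=
    (Real.hasDerivAt_rpow_const (Or.inl (f0_pos hm hx).ne')).comp_hasFDerivAt x
      (hasFDerivAt_f0 hm hx)
  exact h1.mul (hu x).hasFDerivAt

def Gder (i : Fin m) (x : EuclideanSpace ℝ (Fin m)) : EuclideanSpace ℝ (Fin m) →L[ℝ] ℝ :=
  (-(2/(2 * x i)^2)) • EuclideanSpace.proj i
    + cst m • ((x i) • ((-((Qf x)^2)⁻¹) • Sder x) + (Qf x)⁻¹ • EuclideanSpace.proj i)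

def gco (i : Fin m) (x : EuclideanSpace ℝ (Fin m)) : ℝ :=
  (2 * x i)⁻¹ + cst m * (x i / Qf x)

lemma hasFDerivAt_gco (hm : 0 < m) (i : Fin m) {x : EuclideanSpace ℝ (Fin m)}
    (hx : x ∈ Om m) : HasFDerivAt (gco i) (Gder i x) x := by
  have hxi : (2 : ℝ) * x i ≠ 0 := by
    have := hx i; positivity
  have h1 : HasFDerivAt (fun y : EuclideanSpace ℝ (Fin m) => (2 * y i)⁻¹)
      ((-(2/(2 * x i)^2)) • EuclideanSpace.proj (𝕜 := ℝ) i) x := by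
    have hmul : HasDerivAt (fun t : ℝ => 2 * t) 2 (x i) := by
      simpa using (hasDerivAt_id (x i)).const_mul (2 : ℝ)
    have hinv : HasDerivAt (fun t : ℝ => (2 * t)⁻¹) (-(2/(2 * x i)^2)) (x i) := by
      have h := hmul.inv hxi; rw [neg_div] at h; exact h
    have h := hinv.comp_hasFDerivAt x (hasFDerivAt_coord i x); exact h
  have hQinv : HasFDerivAt (fun y : EuclideanSpace ℝ (Fin m) => (Qf y)⁻¹)
      ((-((Qf x)^2)⁻¹) • Sder x) x := by
    have := (hasDerivAt_inv (Qf_pos hm hx).ne').comp_hasFDerivAt x (hasFDerivAt_Qf x)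
    exact this
  have h2 : HasFDerivAt (fun y : EuclideanSpace ℝ (Fin m) => y i * (Qf y)⁻¹)
      ((x i) • ((-((Qf x)^2)⁻¹) • Sder x) + (Qf x)⁻¹ • EuclideanSpace.proj (𝕜 := ℝ) i) x :=
    (hasFDerivAt_coord i x).mul hQinv
  have h3 := h2.const_mul (cst m)
  have h4 := h1.add h3
  have : gco i = fun y : EuclideanSpace ℝ (Fin m) => (2 * y i)⁻¹ + cst m * (y i * (Qf y)⁻¹) := by
    funext y; simp [gco, div_eq_mul_inv, mul_assoc]
  rw [this, Gder]
  exact h4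

def Fder (u : EuclideanSpace ℝ (Fin m) → ℝ) (i : Fin m) (x : EuclideanSpace ℝ (Fin m)) :
    EuclideanSpace ℝ (Fin m) →L[ℝ] ℝ :=
  if x ∈ Om m then
    (u x ^ 2) • Gder i x + gco i x • ((2 * u x) • fderiv ℝ u x)
  else 0

def Ffun (u : EuclideanSpace ℝ (Fin m) → ℝ) (i : Fin m) (x : EuclideanSpace ℝ (Fin m)) : ℝ :=
  if x ∈ Om m then u x ^ 2 * gco i x else 0

lemma hasFDerivAt_usq {u : EuclideanSpace ℝ (Fin m) → ℝ} (hu : Differentiable ℝ u)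
    (x : EuclideanSpace ℝ (Fin m)) :
    HasFDerivAt (fun y => u y ^ 2) ((2 * u x) • fderiv ℝ u x) x := by
  have := (hasDerivAt_pow 2 (u x)).comp_hasFDerivAt x (hu x).hasFDerivAt
  simpa [Function.comp_def] using this

lemma hasFDerivAt_Ffun (hm : 0 < m) {u : EuclideanSpace ℝ (Fin m) → ℝ}
    (hu : Differentiable ℝ u) (hsupp : tsupport u ⊆ Om m) (i : Fin m)
    (x : EuclideanSpace ℝ (Fin m)) :
    HasFDerivAt (Ffun u i) (Fder u i x) x := by
  by_cases hx : x ∈ Om m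
  · have h := (hasFDerivAt_usq hu x).mul (hasFDerivAt_gco hm i hx)
    rw [Fder, if_pos hx]
    refine h.congr_of_eventuallyEq ?_
    filter_upwards [isOpen_Om.mem_nhds hx] with y hy
    rw [Ffun, if_pos hy]; rfl
  · have hxts : x ∉ tsupport u := fun h => hx (hsupp h)
    have hev : Ffun u i =ᶠ[nhds x] (fun _ => (0:ℝ)) := by
      filter_upwards [(isClosed_tsupport u).isOpen_compl.mem_nhds hxts] with y hy
      rw [Ffun]
      rcases em (y ∈ Om m) with h | h
      · rw [if_pos h, image_eq_zero_of_notMem_tsupport hy]; ring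
      · rw [if_neg h]
    rw [Fder, if_neg hx]
    exact (hasFDerivAt_const (0:ℝ) x).congr_of_eventuallyEq hev

lemma normsq_eq (z : EuclideanSpace ℝ (Fin m)) : ‖z‖^2 = Qf z := by
  rw [EuclideanSpace.norm_eq, Real.sq_sqrt (by positivity)]
  simp [Qf, sq_abs]

lemma Sder_apply (x : EuclideanSpace ℝ (Fin m)) (j : Fin m) :
    Sder x (EuclideanSpace.single j (1:ℝ)) = 2 * x j := by
  simp [Sder, EuclideanSpace.single_apply, proj_apply, mul_ite]

lemma projsum_apply (x : EuclideanSpace ℝ (Fin m)) (j : Fin m) :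
    (∑ k, (Pf x / x k) • EuclideanSpace.proj (𝕜 := ℝ) k) (EuclideanSpace.single j (1:ℝ))
      = Pf x / x j := by
  simp [EuclideanSpace.single_apply, proj_apply, mul_ite]

lemma Df0_apply (hm : 0 < m) {x : EuclideanSpace ℝ (Fin m)} (hx : x ∈ Om m) (j : Fin m) :
    Df0 x (EuclideanSpace.single j (1:ℝ))
      = f0 x * ((x j)⁻¹ + 2 * cst m * x j / Qf x) := by
  have hQ := (Qf_pos hm hx).ne'
  have hxj := hx j
  have hP := (Pf_pos hx).ne'
  rw [Df0]
  simp only [ContinuousLinearMap.add_apply, ContinuousLinearMap.coe_smul', Pi.smul_apply,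
    smul_eq_mul, Sder_apply, projsum_apply]
  rw [f0, Real.rpow_sub (Qf_pos hm hx), Real.rpow_one]
  have hA := Real.rpow_pos_of_pos (Qf_pos hm hx) (cst m)
  field_simp
  ring

lemma Vder_apply (hm : 0 < m) {u : EuclideanSpace ℝ (Fin m) → ℝ} {x : EuclideanSpace ℝ (Fin m)}
    (hx : x ∈ Om m) (j : Fin m) :
    Vder u x (EuclideanSpace.single j (1:ℝ))
      = f0 x ^ (-(1/2) : ℝ) * (fderiv ℝ u x (EuclideanSpace.single j (1:ℝ))
          - (u x / 2) * ((x j)⁻¹ + 2 * cst m * x j / Qf x)) := by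
  have hf0 := f0_pos hm hx
  rw [Vder]
  simp only [ContinuousLinearMap.add_apply, ContinuousLinearMap.coe_smul', Pi.smul_apply,
    smul_eq_mul, Df0_apply hm hx]
  rw [Real.rpow_sub hf0, Real.rpow_one]
  field_simp
  ring

lemma Gder_apply (i : Fin m) (x : EuclideanSpace ℝ (Fin m)) :
    Gder i x (EuclideanSpace.single i (1:ℝ))
      = -(2/(2 * x i)^2) + cst m * (x i * (-((Qf x)^2)⁻¹ * (2 * x i)) + (Qf x)⁻¹) := by
  rw [Gder]
  simp only [ContinuousLinearMap.add_apply, ContinuousLinearMap.coe_smul', Pi.smul_apply,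
    smul_eq_mul, Sder_apply]
  rw [show (EuclideanSpace.proj (𝕜 := ℝ) i) (EuclideanSpace.single i (1:ℝ)) = 1 by
    rw [proj_apply, EuclideanSpace.single_apply, if_pos rfl]]
  ring

lemma pointwise_key (hm : 0 < m) {u : EuclideanSpace ℝ (Fin m) → ℝ}
    (hud : Differentiable ℝ u) {x : EuclideanSpace ℝ (Fin m)} (hx : x ∈ Om m) :
    ‖gradient u x‖^2
      - ((1/4) * ∑ k, 1/(x k)^2 + ((m:ℝ)-1)^2/‖x‖^2) * |u x|^2
    = ‖gradient (vfun u) x‖^2 * f0 x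
      + ∑ i, Fder u i x (EuclideanSpace.single i (1:ℝ)) := by
  have hQpos := Qf_pos hm hx
  have hQ := hQpos.ne'
  have hf0 := f0_pos hm hx
  have hgradu := grad_norm_sq u x
  have hfv : fderiv ℝ (vfun u) x = Vder u x := (hasFDerivAt_vfun hm hud hx).fderiv
  have hgradv : ‖gradient (vfun u) x‖^2
      = ∑ i, (Vder u x (EuclideanSpace.single i (1:ℝ)))^2 := by
    rw [grad_norm_sq, hfv]
  rw [hgradu, hgradv, normsq_eq, sq_abs]
  have hBsq : (f0 x ^ (-(1/2):ℝ))^2 * f0 x = 1 := by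
    rw [← Real.rpow_natCast (f0 x ^ (-(1/2):ℝ)) 2, ← Real.rpow_mul hf0.le]
    norm_num
    rw [Real.rpow_neg_one]
    field_simp
  have h1 : (∑ i, (Vder u x (EuclideanSpace.single i (1:ℝ)))^2) * f0 x
      = ∑ i, (fderiv ℝ u x (EuclideanSpace.single i (1:ℝ))
          - (u x/2) * ((x i)⁻¹ + 2*(1-(m:ℝ))*(x i)/Qf x))^2 := by
    rw [Finset.sum_mul]
    refine Finset.sum_congr rfl fun j _ => ?_
    rw [Vder_apply hm hx j, mul_pow]
    calc (f0 x ^ (-(1/2):ℝ))^2 * (fderiv ℝ u x (EuclideanSpace.single j (1:ℝ))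
          - u x / 2 * ((x j)⁻¹ + 2 * cst m * x j / Qf x))^2 * f0 x
        = ((f0 x ^ (-(1/2):ℝ))^2 * f0 x) * (fderiv ℝ u x (EuclideanSpace.single j (1:ℝ))
          - u x / 2 * ((x j)⁻¹ + 2 * cst m * x j / Qf x))^2 := by ring
      _ = _ := by rw [hBsq, one_mul, cst]
  have h2 : ∑ i, Fder u i x (EuclideanSpace.single i (1:ℝ))
      = ∑ i, (2 * u x * (fderiv ℝ u x (EuclideanSpace.single i (1:ℝ)))
            * ((2*(x i))⁻¹ + (1-(m:ℝ))*(x i)/Qf x)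
          + (u x)^2 * (-(1/(2*(x i)^2)) + (1-(m:ℝ))/Qf x - 2*(1-(m:ℝ))*(x i)^2/(Qf x)^2)) := by
    refine Finset.sum_congr rfl fun i _ => ?_
    rw [Fder, if_pos hx]
    simp only [ContinuousLinearMap.add_apply, ContinuousLinearMap.coe_smul', Pi.smul_apply,
      smul_eq_mul, Gder_apply, gco, cst]
    have hxi := hx i
    field_simp
    ring
  rw [h1, h2]
  exact scalar_key m (fun i => x i) (fun i => fderiv ℝ u x (EuclideanSpace.single i (1:ℝ)))
    (u x) (Qf x) hQ hx rfl

-- continuity helpers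
lemma continuous_Qf : Continuous (Qf : EuclideanSpace ℝ (Fin m) → ℝ) :=
  continuous_finset_sum _ fun k _ => ((EuclideanSpace.proj (𝕜 := ℝ) k).continuous).pow 2

lemma continuous_Pf : Continuous (Pf : EuclideanSpace ℝ (Fin m) → ℝ) :=
  continuous_finset_prod _ fun k _ => ((EuclideanSpace.proj (𝕜 := ℝ) k).continuous).abs

lemma continuousAt_f0 (hm : 0 < m) {x : EuclideanSpace ℝ (Fin m)} (hx : x ∈ Om m) :
    ContinuousAt f0 x :=
  (continuous_Pf.continuousAt).mul
    (continuous_Qf.continuousAt.rpow_const (Or.inl (Qf_pos hm hx).ne'))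

lemma continuous_glue {φ : EuclideanSpace ℝ (Fin m) → ℝ} {K : Set (EuclideanSpace ℝ (Fin m))}
    (hK : IsClosed K) (hKOm : K ⊆ Om m)
    (hφ : ∀ x ∈ Om m, ContinuousAt φ x) (hz : ∀ x ∈ Om m, x ∉ K → φ x = 0) :
    Continuous fun x => if x ∈ Om m then φ x else 0 := by
  rw [continuous_iff_continuousAt]
  intro x
  by_cases hx : x ∈ Om m
  · refine (hφ x hx).congr ?_
    filter_upwards [isOpen_Om.mem_nhds hx] with y hy
    rw [if_pos hy]
  · have hxK : x ∉ K := fun h => hx (hKOm h)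
    have hev : (fun _ => (0:ℝ)) =ᶠ[nhds x] fun y => if y ∈ Om m then φ y else 0 := by
      filter_upwards [hK.isOpen_compl.mem_nhds hxK] with y hy
      by_cases hy2 : y ∈ Om m
      · rw [if_pos hy2, hz y hy2 hy]
      · rw [if_neg hy2]
    exact continuousAt_const.congr hev

lemma gradient_zero_of_nmem_tsupport {w : EuclideanSpace ℝ (Fin m) → ℝ}
    {x : EuclideanSpace ℝ (Fin m)} (hx : x ∉ tsupport w) : gradient w x = 0 := by
  have hev : w =ᶠ[nhds x] fun _ => (0:ℝ) := by
    filter_upwards [(isClosed_tsupport w).isOpen_compl.mem_nhds hx] with y hy using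
      image_eq_zero_of_notMem_tsupport hy
  rw [gradient, hev.fderiv_eq]
  simp

lemma fderiv_zero_of_nmem_tsupport {w : EuclideanSpace ℝ (Fin m) → ℝ}
    {x : EuclideanSpace ℝ (Fin m)} (hx : x ∉ tsupport w) : fderiv ℝ w x = 0 := by
  have hev : w =ᶠ[nhds x] fun _ => (0:ℝ) := by
    filter_upwards [(isClosed_tsupport w).isOpen_compl.mem_nhds hx] with y hy using
      image_eq_zero_of_notMem_tsupport hy
  rw [hev.fderiv_eq]
  simp

-- continuity of the divergence scalar
lemma continuousAt_divscalar (hm : 0 < m) {u : EuclideanSpace ℝ (Fin m) → ℝ}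
    (hu : ContDiff ℝ (⊤ : ℕ∞) u) {x : EuclideanSpace ℝ (Fin m)} (hx : x ∈ Om m) :
    ContinuousAt (fun y => ∑ i, ((u y ^ 2) • Gder i y
        + gco i y • ((2 * u y) • fderiv ℝ u y)) (EuclideanSpace.single i (1:ℝ))) x := by
  have hQ := (Qf_pos hm hx).ne'
  refine tendsto_finset_sum _ fun i _ => ?_
  have hxi2 : ((2:ℝ) * x i)^2 ≠ 0 := by have := hx i; positivity
  have hcA : ContinuousAt (fun y : EuclideanSpace ℝ (Fin m) =>
      fderiv ℝ u y (EuclideanSpace.single i (1:ℝ))) x :=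
    ((hu.continuous_fderiv (by simp)).clm_apply continuous_const).continuousAt
  have hproj : ContinuousAt (fun y : EuclideanSpace ℝ (Fin m) => y i) x :=
    (EuclideanSpace.proj (𝕜 := ℝ) i).continuous.continuousAt
  have hcQ : ContinuousAt (Qf : EuclideanSpace ℝ (Fin m) → ℝ) x := continuous_Qf.continuousAt
  have hGder : ContinuousAt (fun y => Gder i y (EuclideanSpace.single i (1:ℝ))) x := by
    have heq : (fun y => Gder i y (EuclideanSpace.single i (1:ℝ)))
        = fun y => -(2/(2 * y i)^2) + cst m * (y i * (-((Qf y)^2)⁻¹ * (2 * y i)) + (Qf y)⁻¹) :=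
      funext fun y => Gder_apply i y
    rw [heq]
    refine ContinuousAt.add ?_ (continuousAt_const.mul (ContinuousAt.add
      (hproj.mul ((((hcQ.pow 2).inv₀ (pow_ne_zero 2 hQ)).neg).mul
        (continuousAt_const.mul hproj))) (hcQ.inv₀ hQ)))
    exact (continuousAt_const.div ((continuousAt_const.mul hproj).pow 2) hxi2).neg
  have hgco : ContinuousAt (gco i) x := by
    have h2xi : (2:ℝ) * x i ≠ 0 := by have := hx i; positivity
    exact ((continuousAt_const.mul hproj).inv₀ h2xi).add
      (continuousAt_const.mul (hproj.div hcQ hQ))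
  have hcu : ContinuousAt u x := hu.continuous.continuousAt
  have heval : (fun y => ((u y ^ 2) • Gder i y
      + gco i y • ((2 * u y) • fderiv ℝ u y)) (EuclideanSpace.single i (1:ℝ)))
      = fun y => u y ^ 2 * (Gder i y (EuclideanSpace.single i (1:ℝ)))
        + gco i y * (2 * u y * fderiv ℝ u y (EuclideanSpace.single i (1:ℝ))) := by
    funext y
    simp only [ContinuousLinearMap.add_apply, ContinuousLinearMap.coe_smul', Pi.smul_apply,
      smul_eq_mul]
  rw [heval]
  exact ((hcu.pow 2).mul hGder).add (hgco.mul ((continuousAt_const.mul hcu).mul hcA))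

-- continuity of ψ₃ on Om
lemma continuousAt_psi3 (hm : 0 < m) {u : EuclideanSpace ℝ (Fin m) → ℝ}
    (hu : ContDiff ℝ (⊤ : ℕ∞) u) {x : EuclideanSpace ℝ (Fin m)} (hx : x ∈ Om m) :
    ContinuousAt (fun y => (∑ i, (f0 y ^ (-(1/2):ℝ)
        * (fderiv ℝ u y (EuclideanSpace.single i (1:ℝ))
          - (u y / 2) * ((y i)⁻¹ + 2 * cst m * y i / Qf y)))^2) * f0 y) x := by
  have hQ := (Qf_pos hm hx).ne'
  have hf0 := (f0_pos hm hx).ne'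
  have hcf0 : ContinuousAt f0 x := continuousAt_f0 hm hx
  have hcQ : ContinuousAt (Qf : EuclideanSpace ℝ (Fin m) → ℝ) x := continuous_Qf.continuousAt
  have hcu : ContinuousAt u x := hu.continuous.continuousAt
  refine ContinuousAt.mul (tendsto_finset_sum _ fun i _ => ?_) hcf0
  have hproj : ContinuousAt (fun y : EuclideanSpace ℝ (Fin m) => y i) x :=
    (EuclideanSpace.proj (𝕜 := ℝ) i).continuous.continuousAt
  have hcA : ContinuousAt (fun y : EuclideanSpace ℝ (Fin m) =>
      fderiv ℝ u y (EuclideanSpace.single i (1:ℝ))) x :=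
    ((hu.continuous_fderiv (by simp)).clm_apply continuous_const).continuousAt
  exact (((hcf0.rpow_const (Or.inl hf0)).mul (hcA.sub ((hcu.div continuousAt_const
    (by norm_num)).mul ((hproj.inv₀ (hx i)).add ((continuousAt_const.mul hproj).div hcQ hQ))))).pow 2)

-- the three auxiliary integrands
def I2fun (u : EuclideanSpace ℝ (Fin m) → ℝ) (x : EuclideanSpace ℝ (Fin m)) : ℝ :=
  if x ∈ Om m then ((1/4) * ∑ k, 1/(x k)^2 + ((m:ℝ)-1)^2/‖x‖^2) * |u x|^2 else 0
def I3fun (u : EuclideanSpace ℝ (Fin m) → ℝ) (x : EuclideanSpace ℝ (Fin m)) : ℝ :=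
  if x ∈ Om m then ‖gradient (vfun u) x‖^2 * f0 x else 0
def Dvfun (u : EuclideanSpace ℝ (Fin m) → ℝ) (x : EuclideanSpace ℝ (Fin m)) : ℝ :=
  ∑ i, Fder u i x (EuclideanSpace.single i (1:ℝ))

lemma grad_sq_eq (u : EuclideanSpace ℝ (Fin m) → ℝ) :
    (fun x => ‖gradient u x‖^2) = fun x => ‖fderiv ℝ u x‖^2 := by
  funext x
  rw [show ‖gradient u x‖ = ‖fderiv ℝ u x‖ from by
    rw [gradient]; exact LinearIsometryEquiv.norm_map _ _]

lemma cont_I1 {u : EuclideanSpace ℝ (Fin m) → ℝ} (hu : ContDiff ℝ (⊤ : ℕ∞) u) :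
    Continuous fun x => ‖gradient u x‖^2 := by
  rw [grad_sq_eq]
  exact (hu.continuous_fderiv (by simp)).norm.pow 2

lemma hcs_I1 {u : EuclideanSpace ℝ (Fin m) → ℝ} (hu_cpt : HasCompactSupport u) :
    HasCompactSupport fun x => ‖gradient u x‖^2 :=
  HasCompactSupport.intro hu_cpt fun x hx => by
    rw [gradient_zero_of_nmem_tsupport hx]; simp

lemma tsupport_vfun_subset (u : EuclideanSpace ℝ (Fin m) → ℝ) :
    tsupport (vfun u) ⊆ tsupport u :=
  closure_mono fun y hy => by
    simp only [Function.mem_support, vfun] at hy ⊢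
    intro h; exact hy (by rw [h, mul_zero])

lemma cont_I2 (hm : 0 < m) {u : EuclideanSpace ℝ (Fin m) → ℝ} (hu : ContDiff ℝ (⊤ : ℕ∞) u)
    (hu_supp : tsupport u ⊆ Om m) : Continuous (I2fun u) := by
  refine continuous_glue (isClosed_tsupport u) hu_supp (fun x hx => ?_) (fun x hx hxt => ?_)
  · have hns : ‖x‖^2 ≠ 0 := by rw [normsq_eq]; exact (Qf_pos hm hx).ne'
    refine ContinuousAt.mul (ContinuousAt.add (continuousAt_const.mul
      (tendsto_finset_sum _ fun k _ => continuousAt_const.div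
        (((EuclideanSpace.proj (𝕜 := ℝ) k).continuous.continuousAt).pow 2)
        (pow_ne_zero 2 (hx k))))
      (continuousAt_const.div ((continuous_norm.pow 2).continuousAt) hns))
      ((hu.continuous.abs.pow 2).continuousAt)
  · rw [image_eq_zero_of_notMem_tsupport hxt]; simp

lemma hcs_I2 {u : EuclideanSpace ℝ (Fin m) → ℝ} (hu_cpt : HasCompactSupport u) :
    HasCompactSupport (I2fun u) :=
  HasCompactSupport.intro hu_cpt fun x hx => by
    rw [I2fun]
    by_cases h : x ∈ Om m
    · rw [if_pos h, image_eq_zero_of_notMem_tsupport hx]; simp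
    · rw [if_neg h]

lemma I3_eq_psi3 (hm : 0 < m) {u : EuclideanSpace ℝ (Fin m) → ℝ} (hud : Differentiable ℝ u)
    {y : EuclideanSpace ℝ (Fin m)} (hy : y ∈ Om m) :
    ‖gradient (vfun u) y‖^2 * f0 y
      = (∑ i, (f0 y ^ (-(1/2):ℝ) * (fderiv ℝ u y (EuclideanSpace.single i (1:ℝ))
          - (u y / 2) * ((y i)⁻¹ + 2 * cst m * y i / Qf y)))^2) * f0 y := by
  congr 1
  rw [grad_norm_sq, (hasFDerivAt_vfun hm hud hy).fderiv]
  exact Finset.sum_congr rfl fun i _ => by rw [Vder_apply hm hy]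

lemma cont_I3 (hm : 0 < m) {u : EuclideanSpace ℝ (Fin m) → ℝ} (hu : ContDiff ℝ (⊤ : ℕ∞) u)
    (hu_supp : tsupport u ⊆ Om m) : Continuous (I3fun u) := by
  refine continuous_glue (isClosed_tsupport u) hu_supp (fun x hx => ?_) (fun x hx hxt => ?_)
  · refine (continuousAt_psi3 hm hu hx).congr ?_
    filter_upwards [isOpen_Om.mem_nhds hx] with y hy
    exact (I3_eq_psi3 hm (hu.differentiable (by simp)) hy).symm
  · rw [gradient_zero_of_nmem_tsupport fun h => hxt (tsupport_vfun_subset u h)]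
    simp

lemma hcs_I3 {u : EuclideanSpace ℝ (Fin m) → ℝ} (hu_cpt : HasCompactSupport u) :
    HasCompactSupport (I3fun u) :=
  HasCompactSupport.intro hu_cpt fun x hx => by
    rw [I3fun]
    by_cases h : x ∈ Om m
    · rw [if_pos h, gradient_zero_of_nmem_tsupport fun hh => hx (tsupport_vfun_subset u hh)]
      simp
    · rw [if_neg h]

lemma Dvfun_eq {u : EuclideanSpace ℝ (Fin m) → ℝ} :
    Dvfun u = fun x => if x ∈ Om m then
      (∑ i, ((u x ^ 2) • Gder i x + gco i x • ((2 * u x) • fderiv ℝ u x))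
        (EuclideanSpace.single i (1:ℝ))) else 0 := by
  funext x
  rw [Dvfun]
  by_cases hx : x ∈ Om m
  · rw [if_pos hx]
    exact Finset.sum_congr rfl fun i _ => by rw [Fder, if_pos hx]
  · rw [if_neg hx]
    refine Finset.sum_eq_zero fun i _ => by rw [Fder, if_neg hx]; rfl

lemma cont_Dv (hm : 0 < m) {u : EuclideanSpace ℝ (Fin m) → ℝ} (hu : ContDiff ℝ (⊤ : ℕ∞) u)
    (hu_supp : tsupport u ⊆ Om m) : Continuous (Dvfun u) := by
  rw [Dvfun_eq]
  refine continuous_glue (isClosed_tsupport u) hu_supp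
    (fun x hx => continuousAt_divscalar hm hu hx) (fun x hx hxt => ?_)
  refine Finset.sum_eq_zero fun i _ => ?_
  simp only [ContinuousLinearMap.add_apply, ContinuousLinearMap.coe_smul', Pi.smul_apply,
    smul_eq_mul, image_eq_zero_of_notMem_tsupport hxt]
  ring

lemma hcs_Dv {u : EuclideanSpace ℝ (Fin m) → ℝ} (hu_cpt : HasCompactSupport u) :
    HasCompactSupport (Dvfun u) :=
  HasCompactSupport.intro hu_cpt fun x hx => by
    rw [Dvfun]
    refine Finset.sum_eq_zero fun i _ => ?_
    rw [Fder]
    by_cases h : x ∈ Om m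
    · rw [if_pos h]
      simp only [ContinuousLinearMap.add_apply, ContinuousLinearMap.coe_smul', Pi.smul_apply,
        smul_eq_mul, image_eq_zero_of_notMem_tsupport hx]
      ring
    · rw [if_neg h]; rfl

lemma fstat_eq (y : EuclideanSpace ℝ (Fin m)) :
    (∏ k, |y k|) * ‖y‖ ^ (2 * (1 - (m:ℝ))) = f0 y := by
  rw [f0, Pf]
  congr 1
  rw [Real.rpow_mul (norm_nonneg y), cst]
  congr 1
  rw [show ((2:ℝ)) = ((2:ℕ):ℝ) by norm_num, Real.rpow_natCast, normsq_eq]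

lemma vstat_eq (u : EuclideanSpace ℝ (Fin m) → ℝ) :
    (fun y => ((∏ k, |y k|) * ‖y‖ ^ (2 * (1 - (m:ℝ))))^(-(1/2):ℝ) * u y) = vfun u := by
  funext y
  rw [vfun, fstat_eq]

lemma pointwise_global (hm : 0 < m) {u : EuclideanSpace ℝ (Fin m) → ℝ} (hu : ContDiff ℝ (⊤ : ℕ∞) u)
    (hu_supp : tsupport u ⊆ Om m) (x : EuclideanSpace ℝ (Fin m)) :
    ‖gradient u x‖^2 = I2fun u x + (I3fun u x + Dvfun u x) := by
  by_cases hx : x ∈ Om m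
  · have h := pointwise_key hm (hu.differentiable (by simp)) hx
    rw [I2fun, if_pos hx, I3fun, if_pos hx, Dvfun]
    linarith [h]
  · have hxt : x ∉ tsupport u := fun h => hx (hu_supp h)
    rw [I2fun, if_neg hx, I3fun, if_neg hx, gradient_zero_of_nmem_tsupport hxt]
    have hDv : Dvfun u x = 0 := by
      rw [Dvfun]
      exact Finset.sum_eq_zero fun i _ => by rw [Fder, if_neg hx]; rfl
    rw [hDv]
    simp

lemma integral_Dv_zero {n : ℕ} {u : EuclideanSpace ℝ (Fin (n+1)) → ℝ}
    (hu : ContDiff ℝ (⊤ : ℕ∞) u) (hu_cpt : HasCompactSupport u)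
    (hu_supp : tsupport u ⊆ Om (n+1)) :
    ∫ x, Dvfun u x = 0 := by
  have hm : 0 < n + 1 := n.succ_pos
  have hc : Continuous (Dvfun u) := cont_Dv hm hu hu_supp
  have h := div_int_zero_eucl (Ffun u) (Fder u)
    (fun i x => hasFDerivAt_Ffun hm (hu.differentiable (by simp)) hu_supp i x)
    hc hu_cpt (isClosed_tsupport u)
    (fun i x hx => by
      rw [Ffun]
      by_cases h : x ∈ Om (n+1)
      · rw [if_pos h, image_eq_zero_of_notMem_tsupport hx]; ring
      · rw [if_neg h])
  exact h

end HardyAux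

/-- **Many-particle-type Hardy GSR for the product of coordinates.** -/
theorem hardy_gsr_coordinate_product (N : ℕ) (hN : 1 ≤ N)
    (u : EuclideanSpace ℝ (Fin N) → ℝ) (hu : ContDiff ℝ (⊤ : ℕ∞) u)
    (hu_cpt : HasCompactSupport u)
    (hu_supp : tsupport u ⊆ {x : EuclideanSpace ℝ (Fin N) | ∀ k, x k ≠ 0}) :
    ((∫ x in {x : EuclideanSpace ℝ (Fin N) | ∀ k, x k ≠ 0}, ‖gradient u x‖ ^ 2)
        - ∫ x in {x : EuclideanSpace ℝ (Fin N) | ∀ k, x k ≠ 0},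
            ((1 / 4) * ∑ k : Fin N, 1 / (x k) ^ 2 + ((N : ℝ) - 1) ^ 2 / ‖x‖ ^ 2) * |u x| ^ 2
      = ∫ x in {x : EuclideanSpace ℝ (Fin N) | ∀ k, x k ≠ 0},
          ‖gradient (fun y =>
              ((∏ k : Fin N, |y k|) * ‖y‖ ^ (2 * (1 - (N : ℝ)))) ^ (-(1 / 2 : ℝ)) * u y) x‖ ^ 2
            * ((∏ k : Fin N, |x k|) * ‖x‖ ^ (2 * (1 - (N : ℝ)))))
    ∧ 0 ≤ (∫ x in {x : EuclideanSpace ℝ (Fin N) | ∀ k, x k ≠ 0}, ‖gradient u x‖ ^ 2)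
        - ∫ x in {x : EuclideanSpace ℝ (Fin N) | ∀ k, x k ≠ 0},
            ((1 / 4) * ∑ k : Fin N, 1 / (x k) ^ 2 + ((N : ℝ) - 1) ^ 2 / ‖x‖ ^ 2) * |u x| ^ 2 := by
  obtain ⟨n, rfl⟩ : ∃ n, N = n + 1 := ⟨N - 1, by omega⟩
  have hm : 0 < n + 1 := n.succ_pos
  have hsupp : tsupport u ⊆ Om (n+1) := hu_supp
  have hud : Differentiable ℝ u := hu.differentiable (by simp)
  have hae : (Om (n+1) : Set (EuclideanSpace ℝ (Fin (n+1)))) =ᵐ[volume] Set.univ :=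
    ae_eq_univ.2 (compl_null (n+1))
  have hmeas : MeasurableSet {x : EuclideanSpace ℝ (Fin (n+1)) | ∀ k, x k ≠ 0} :=
    (isOpen_Om (m := n+1)).measurableSet
  have conv : ∀ g : EuclideanSpace ℝ (Fin (n+1)) → ℝ,
      (∫ x in {x : EuclideanSpace ℝ (Fin (n+1)) | ∀ k, x k ≠ 0}, g x) = ∫ x, g x := fun g => by
    rw [show {x : EuclideanSpace ℝ (Fin (n+1)) | ∀ k, x k ≠ 0} = Om (n+1) from rfl,
      setIntegral_congr_set hae, setIntegral_univ]
  -- conversion of the three set integrals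
  have h1 : (∫ x in {x : EuclideanSpace ℝ (Fin (n+1)) | ∀ k, x k ≠ 0}, ‖gradient u x‖ ^ 2)
      = ∫ x, ‖gradient u x‖ ^ 2 := conv _
  have peq2 : ∀ x : EuclideanSpace ℝ (Fin (n+1)),
      ((1 / 4) * ∑ k : Fin (n+1), 1 / (x k) ^ 2
        + (((n+1 : ℕ) : ℝ) - 1) ^ 2 / ‖x‖ ^ 2) * |u x| ^ 2 = I2fun u x := by
    intro x
    by_cases hx : x ∈ Om (n+1)
    · rw [I2fun, if_pos hx]
    · rw [I2fun, if_neg hx,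
        image_eq_zero_of_notMem_tsupport fun h => hx (hsupp h)]
      simp
  have h2 : (∫ x in {x : EuclideanSpace ℝ (Fin (n+1)) | ∀ k, x k ≠ 0},
        ((1 / 4) * ∑ k : Fin (n+1), 1 / (x k) ^ 2
          + (((n+1 : ℕ) : ℝ) - 1) ^ 2 / ‖x‖ ^ 2) * |u x| ^ 2)
      = ∫ x, I2fun u x := by
    rw [conv]
    exact integral_congr_ae (Filter.Eventually.of_forall peq2)
  have peq3 : ∀ x : EuclideanSpace ℝ (Fin (n+1)),
      ‖gradient (fun y => ((∏ k : Fin (n+1), |y k|)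
          * ‖y‖ ^ (2 * (1 - ((n+1 : ℕ) : ℝ)))) ^ (-(1 / 2 : ℝ)) * u y) x‖ ^ 2
        * ((∏ k : Fin (n+1), |x k|) * ‖x‖ ^ (2 * (1 - ((n+1 : ℕ) : ℝ)))) = I3fun u x := by
    intro x
    rw [vstat_eq u, fstat_eq x]
    by_cases hx : x ∈ Om (n+1)
    · rw [I3fun, if_pos hx]
    · rw [I3fun, if_neg hx, gradient_zero_of_nmem_tsupport
        fun h => (fun hh => hx (hsupp hh)) (tsupport_vfun_subset u h)]
      simp
  have h3 : (∫ x in {x : EuclideanSpace ℝ (Fin (n+1)) | ∀ k, x k ≠ 0},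
        ‖gradient (fun y => ((∏ k : Fin (n+1), |y k|)
            * ‖y‖ ^ (2 * (1 - ((n+1 : ℕ) : ℝ)))) ^ (-(1 / 2 : ℝ)) * u y) x‖ ^ 2
          * ((∏ k : Fin (n+1), |x k|) * ‖x‖ ^ (2 * (1 - ((n+1 : ℕ) : ℝ)))))
      = ∫ x, I3fun u x := by
    rw [conv]
    exact integral_congr_ae (Filter.Eventually.of_forall peq3)
  -- integrability
  have int2 : Integrable (I2fun u) :=
    (cont_I2 hm hu hsupp).integrable_of_hasCompactSupport (hcs_I2 hu_cpt)
  have int3 : Integrable (I3fun u) :=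
    (cont_I3 hm hu hsupp).integrable_of_hasCompactSupport (hcs_I3 hu_cpt)
  have intD : Integrable (Dvfun u) :=
    (cont_Dv hm hu hsupp).integrable_of_hasCompactSupport (hcs_Dv hu_cpt)
  have key : (∫ x, ‖gradient u x‖ ^ 2)
      = (∫ x, I2fun u x) + ((∫ x, I3fun u x) + ∫ x, Dvfun u x) := by
    calc (∫ x, ‖gradient u x‖ ^ 2)
        = ∫ x, (I2fun u x + (I3fun u x + Dvfun u x)) :=
          integral_congr_ae (Filter.Eventually.of_forall fun x =>
            pointwise_global hm hu hsupp x)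
      _ = (∫ x, I2fun u x) + ∫ x, (I3fun u x + Dvfun u x) := integral_add int2 (int3.add intD)
      _ = (∫ x, I2fun u x) + ((∫ x, I3fun u x) + ∫ x, Dvfun u x) := by
          rw [integral_add int3 intD]
  have hDv0 : (∫ x, Dvfun u x) = 0 := integral_Dv_zero hu hu_cpt hsupp
  have main : (∫ x in {x : EuclideanSpace ℝ (Fin (n+1)) | ∀ k, x k ≠ 0}, ‖gradient u x‖ ^ 2)
      - (∫ x in {x : EuclideanSpace ℝ (Fin (n+1)) | ∀ k, x k ≠ 0},
          ((1 / 4) * ∑ k : Fin (n+1), 1 / (x k) ^ 2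
            + (((n+1 : ℕ) : ℝ) - 1) ^ 2 / ‖x‖ ^ 2) * |u x| ^ 2)
      = ∫ x in {x : EuclideanSpace ℝ (Fin (n+1)) | ∀ k, x k ≠ 0},
          ‖gradient (fun y => ((∏ k : Fin (n+1), |y k|)
              * ‖y‖ ^ (2 * (1 - ((n+1 : ℕ) : ℝ)))) ^ (-(1 / 2 : ℝ)) * u y) x‖ ^ 2
            * ((∏ k : Fin (n+1), |x k|) * ‖x‖ ^ (2 * (1 - ((n+1 : ℕ) : ℝ)))) := by
    rw [h1, h2, h3, key, hDv0]
    ring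
  refine ⟨main, ?_⟩
  rw [main]
  refine setIntegral_nonneg hmeas fun x _ => ?_
  have hf0 : (0:ℝ) ≤ (∏ k : Fin (n+1), |x k|) * ‖x‖ ^ (2 * (1 - ((n+1 : ℕ) : ℝ))) :=
    mul_nonneg (Finset.prod_nonneg fun k _ => abs_nonneg _) (Real.rpow_nonneg (norm_nonneg _) _)
  positivity
end
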